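/- arXiv:2301.02843 — 4 statements merged into one kernel-verified Lean document; each statement's English description precedes it below -/
import Mathlib

section
/- Let e ≥ 0 be an integer and let h be a bijection of K_m. Define F : F_{2^n} → F_{2^n} by F(x) = x^{2^e}·h(Tr_{2^n/2^m}(x)), and for a ∈ K_m, a ≠ 0, define the Boolean function H_a on K_m by H_a(x) = Tr_{2^m/2}(a·x^{2^e}·h(x)) with Walsh transform W_{H_a}(ω) = Σ_{x∈K_m} (−1)^{H_a(x)+Tr_{2^m/2}(ωx)} for ω ∈ K_m. Then for every a ∈ K_m with a ≠ 0 and every ω ∈ F_{2^n}: W_{F_a}(ω) = 2^m·W_{H_a}(ω) if ω ∈ K_m, and W_{F_a}(ω) = 0 if ω ∉ K_m. -/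
open scoped Classical BigOperators

noncomputable section

/-- The finite field with `2^k` elements. -/
abbrev GF (k : ℕ) := GaloisField 2 k

noncomputable instance (k : ℕ) : Fintype (GF k) := Fintype.ofFinite _

/-- The absolute trace `Tr_{2^k/2}`, viewed as an element of `GF k`
(its values lie in the prime field `{0,1}`). -/
def atr (k : ℕ) (x : GF k) : GF k := ∑ j ∈ Finset.range k, x ^ 2 ^ j

/-- `(-1)^b` for `b ∈ {0,1} ⊆ GF k`. -/
def chi (k : ℕ) (x : GF k) : ℤ := if x = 0 then 1 else -1

/-- The Walsh transform of a Boolean-valued function `f` on `GF k`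
(`f` takes values in the prime field `{0,1}`). -/
def walsh (k : ℕ) (f : GF k → GF k) (ω : GF k) : ℤ :=
  ∑ x : GF k, chi k (f x + atr k (ω * x))

/-- The trace `Tr_{2^m/2}` of the subfield `K_m ⊆ GF (2*m)`, viewed inside `GF (2*m)`. -/
def trKm (m : ℕ) (x : GF (2*m)) : GF (2*m) := ∑ j ∈ Finset.range m, x ^ 2 ^ j

/-- The subfield `K_m = {x : x^(2^m) = x}` of `GF (2*m)`, as a finset. -/
def Km (m : ℕ) : Finset (GF (2*m)) := Finset.univ.filter (fun x => x ^ 2 ^ m = x)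

/-- `max_{a ≠ 0, ω} |W_{F_a}(ω)|` for a vectorial function `F` on `GF (2*m)`. -/
def maxAbsW (m : ℕ) (F : GF (2*m) → GF (2*m)) : ℕ :=
  Finset.sup ((Finset.univ.filter (fun a : GF (2*m) => a ≠ 0)) ×ˢ (Finset.univ : Finset (GF (2*m))))
    (fun p => (walsh (2*m) (fun x => atr (2*m) (p.1 * F x)) p.2).natAbs)

/-- The nonlinearity `N_F = 2^(n-1) - (1/2) max_{a ≠ 0, ω} |W_{F_a}(ω)|`, `n = 2m`. -/
def nlin (m : ℕ) (F : GF (2*m) → GF (2*m)) : ℚ :=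
  2 ^ (2*m - 1) - (maxAbsW m F : ℚ) / 2


namespace Stmt0Aux

variable {m : ℕ}

lemma self_add_self (x : GF (2*m)) : x + x = 0 := CharTwo.add_self_eq_zero x

lemma frob_add (j : ℕ) (x y : GF (2*m)) : (x + y) ^ 2 ^ j = x ^ 2 ^ j + y ^ 2 ^ j :=
  add_pow_char_pow ..

lemma gf_pow_card (hm : 1 ≤ m) (x : GF (2*m)) : x ^ 2 ^ (2*m) = x := by
  have h2m : 2*m ≠ 0 := by omega
  have hc : Fintype.card (GF (2*m)) = 2 ^ (2*m) := by
    rw [← Nat.card_eq_fintype_card]; exact GaloisField.card 2 (2*m) h2m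
  rw [← hc]; exact FiniteField.pow_card x

lemma trKm_add (x y : GF (2*m)) : trKm m (x + y) = trKm m x + trKm m y := by
  unfold trKm
  rw [← Finset.sum_add_distrib]
  exact Finset.sum_congr rfl fun j _ => frob_add j x y

lemma atr_eq (x : GF (2*m)) : atr (2*m) x = trKm m (x + x ^ 2 ^ m) := by
  rw [trKm_add]
  unfold atr trKm
  rw [show Finset.range (2*m) = Finset.range (m+m) from by rw [two_mul], Finset.sum_range_add]
  congr 1
  exact Finset.sum_congr rfl fun j _ => by rw [pow_add, pow_mul]

lemma atr_add (x y : GF (2*m)) : atr (2*m) (x + y) = atr (2*m) x + atr (2*m) y := by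
  unfold atr
  rw [← Finset.sum_add_distrib]
  exact Finset.sum_congr rfl fun j _ => frob_add j x y

lemma mem_Km {x : GF (2*m)} : x ∈ Km m ↔ x ^ 2 ^ m = x := by
  simp [Km]

lemma atr_vanish {z : GF (2*m)} (hz : z ^ 2 ^ m = z) : atr (2*m) z = 0 := by
  rw [atr_eq, hz, self_add_self]
  simp [trKm]

lemma T_mem (hm : 1 ≤ m) (x : GF (2*m)) : (x + x ^ 2 ^ m) ^ 2 ^ m = x + x ^ 2 ^ m := by
  rw [frob_add]
  rw [← pow_mul, ← pow_add, ← two_mul, gf_pow_card hm]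
  ring

lemma sq_idem {t : GF (2*m)} (h : t ^ 2 = t) : t = 0 ∨ t = 1 := by
  have h0 : t * (t - 1) = 0 := by linear_combination h
  rcases mul_eq_zero.mp h0 with h1 | h1
  · exact Or.inl h1
  · exact Or.inr (sub_eq_zero.mp h1)

lemma trKm_shift {z : GF (2*m)} (hz : z ^ 2 ^ m = z) :
    ∑ j ∈ Finset.range m, z ^ 2 ^ (j + 1) = trKm m z := by
  have h1 : ∑ j ∈ Finset.range (m+1), z ^ 2 ^ j
      = (∑ j ∈ Finset.range m, z ^ 2 ^ (j+1)) + z ^ 2 ^ 0 := Finset.sum_range_succ' _ m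
  have h2 : ∑ j ∈ Finset.range (m+1), z ^ 2 ^ j
      = (∑ j ∈ Finset.range m, z ^ 2 ^ j) + z ^ 2 ^ m := Finset.sum_range_succ _ m
  unfold trKm
  linear_combination h2 - h1 + hz

lemma trKm_sq {z : GF (2*m)} (hz : z ^ 2 ^ m = z) : (trKm m z) ^ 2 = trKm m z := by
  unfold trKm
  rw [sum_pow_char]
  calc ∑ j ∈ Finset.range m, (z ^ 2 ^ j) ^ 2
      = ∑ j ∈ Finset.range m, z ^ 2 ^ (j+1) :=
        Finset.sum_congr rfl fun j _ => by rw [← pow_mul, ← pow_succ]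
    _ = trKm m z := trKm_shift hz

lemma trKm_01 {z : GF (2*m)} (hz : z ^ 2 ^ m = z) : trKm m z = 0 ∨ trKm m z = 1 :=
  sq_idem (trKm_sq hz)

lemma atr_sq (hm : 1 ≤ m) (x : GF (2*m)) : (atr (2*m) x) ^ 2 = atr (2*m) x := by
  rw [atr_eq]
  exact trKm_sq (T_mem hm x)

lemma atr_01 (hm : 1 ≤ m) (x : GF (2*m)) : atr (2*m) x = 0 ∨ atr (2*m) x = 1 :=
  sq_idem (atr_sq hm x)

lemma one_add_one : (1 : GF (2*m)) + 1 = 0 := self_add_self 1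

lemma chi_add {s t : GF (2*m)} (hs : s = 0 ∨ s = 1) (ht : t = 0 ∨ t = 1) :
    chi (2*m) (s + t) = chi (2*m) s * chi (2*m) t := by
  have h1 : (1 : GF (2*m)) ≠ 0 := one_ne_zero
  rcases hs with rfl | rfl <;> rcases ht with rfl | rfl <;>
    simp [chi, one_add_one, h1]

lemma add_01 {s t : GF (2*m)} (hs : s = 0 ∨ s = 1) (ht : t = 0 ∨ t = 1) :
    s + t = 0 ∨ s + t = 1 := by
  rcases hs with rfl | rfl <;> rcases ht with rfl | rfl <;> simp [one_add_one]

end Stmt0Aux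

namespace Stmt0Aux

variable {m : ℕ}

lemma Km_add {x y : GF (2*m)} (hx : x ^ 2 ^ m = x) (hy : y ^ 2 ^ m = y) :
    (x + y) ^ 2 ^ m = x + y := by rw [frob_add, hx, hy]

lemma Km_mul {x y : GF (2*m)} (hx : x ^ 2 ^ m = x) (hy : y ^ 2 ^ m = y) :
    (x * y) ^ 2 ^ m = x * y := by rw [mul_pow, hx, hy]

lemma Km_pow (e : ℕ) {x : GF (2*m)} (hx : x ^ 2 ^ m = x) :
    (x ^ 2 ^ e) ^ 2 ^ m = x ^ 2 ^ e := by rw [pow_right_comm, hx]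

lemma fiber_sum {M : Type*} [AddCommMonoid M] (f : GF (2*m) → M) {t v : GF (2*m)}
    (hv : v + v ^ 2 ^ m = t) :
    ∑ x ∈ Finset.univ.filter (fun x : GF (2*m) => x + x ^ 2 ^ m = t), f x
      = ∑ u ∈ Km m, f (v + u) := by
  apply Finset.sum_nbij' (i := fun x => x + v) (j := fun u => v + u)
  · intro x hx
    have hx' : x + x ^ 2 ^ m = t := (Finset.mem_filter.mp hx).2
    rw [mem_Km, frob_add]
    have e1 : x ^ 2 ^ m = x + t := by linear_combination hx' - self_add_self x
    have e2 : v ^ 2 ^ m = v + t := by linear_combination hv - self_add_self v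
    rw [e1, e2]
    linear_combination self_add_self t
  · intro u hu
    have huK := mem_Km.mp hu
    rw [Finset.mem_filter]
    refine ⟨Finset.mem_univ _, ?_⟩
    rw [frob_add, huK]
    linear_combination hv + self_add_self u
  · intro x _; linear_combination self_add_self v
  · intro u _; linear_combination self_add_self v
  · intro x _
    congr 1
    linear_combination - self_add_self v

lemma card_Km_le (hm : 1 ≤ m) : (Km m).card ≤ 2 ^ m := by
  classical
  set P : Polynomial (GF (2*m)) := Polynomial.X ^ (2^m) - Polynomial.X with hP
  have hp1 : 1 < 2 ^ m := Nat.one_lt_two_pow (by omega)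
  have hP0 : P ≠ 0 := FiniteField.X_pow_card_sub_X_ne_zero _ hp1
  have hsub : Km m ⊆ P.roots.toFinset := by
    intro x hx
    rw [Multiset.mem_toFinset, Polynomial.mem_roots']
    refine ⟨hP0, ?_⟩
    simp [hP, Polynomial.IsRoot, mem_Km.mp hx]
  calc (Km m).card ≤ P.roots.toFinset.card := Finset.card_le_card hsub
    _ ≤ Multiset.card P.roots := Multiset.toFinset_card_le _
    _ ≤ P.natDegree := P.card_roots'
    _ = 2 ^ m := FiniteField.X_pow_card_sub_X_natDegree_eq _ hp1

lemma image_subset (hm : 1 ≤ m) :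
    (Finset.univ.image (fun x : GF (2*m) => x + x ^ 2 ^ m)) ⊆ Km m := by
  intro t ht
  obtain ⟨x, _, rfl⟩ := Finset.mem_image.mp ht
  exact mem_Km.mpr (T_mem hm x)

lemma card_eq_mul (hm : 1 ≤ m) :
    2 ^ (2*m) = (Finset.univ.image (fun x : GF (2*m) => x + x ^ 2 ^ m)).card * (Km m).card := by
  classical
  have hcard : Fintype.card (GF (2*m)) = 2 ^ (2*m) := by
    rw [← Nat.card_eq_fintype_card]; exact GaloisField.card 2 (2*m) (by omega)
  have h1 : (Finset.univ : Finset (GF (2*m))).card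
      = ∑ t ∈ Finset.univ.image (fun x : GF (2*m) => x + x ^ 2 ^ m),
          (Finset.univ.filter (fun x : GF (2*m) => x + x ^ 2 ^ m = t)).card :=
    Finset.card_eq_sum_card_fiberwise (fun x _ => Finset.mem_image_of_mem _ (Finset.mem_univ x))
  have h2 : ∀ t ∈ Finset.univ.image (fun x : GF (2*m) => x + x ^ 2 ^ m),
      (Finset.univ.filter (fun x : GF (2*m) => x + x ^ 2 ^ m = t)).card = (Km m).card := by
    intro t ht
    obtain ⟨v, _, hv⟩ := Finset.mem_image.mp ht
    rw [Finset.card_eq_sum_ones, fiber_sum (fun _ => 1) hv, ← Finset.card_eq_sum_ones]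
  rw [← hcard, ← Finset.card_univ, h1, Finset.sum_congr rfl h2, Finset.sum_const, smul_eq_mul]

lemma Km_card (hm : 1 ≤ m) : (Km m).card = 2 ^ m := by
  have hle := card_Km_le hm
  have hmul := card_eq_mul (m := m) hm
  have hsub := Finset.card_le_card (image_subset (m := m) hm)
  set c1 := (Finset.univ.image (fun x : GF (2*m) => x + x ^ 2 ^ m)).card
  set c2 := (Km m).card
  have hpow : 2 ^ (2*m) = 2 ^ m * 2 ^ m := by rw [two_mul, pow_add]
  refine le_antisymm hle ?_
  have hA : 2 ^ m * 2 ^ m ≤ c2 * c2 := by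
    rw [← hpow, hmul]; exact Nat.mul_le_mul_right _ hsub
  have hB : c2 * c2 ≤ c2 * 2 ^ m := Nat.mul_le_mul_left _ hle
  have := le_trans hA hB
  rw [mul_comm c2 (2^m)] at this
  exact Nat.le_of_mul_le_mul_left this (by positivity)

lemma T_surj (hm : 1 ≤ m) {t : GF (2*m)} (ht : t ∈ Km m) :
    ∃ v : GF (2*m), v + v ^ 2 ^ m = t := by
  have hmul := card_eq_mul (m := m) hm
  have hsub := image_subset (m := m) hm
  have hc2 := Km_card hm
  have hc1 : (Finset.univ.image (fun x : GF (2*m) => x + x ^ 2 ^ m)).card = 2 ^ m := by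
    rw [hc2] at hmul
    have hpow : 2 ^ (2*m) = 2 ^ m * 2 ^ m := by rw [two_mul, pow_add]
    rw [hpow] at hmul
    exact Nat.eq_of_mul_eq_mul_right (by positivity) hmul.symm
  have heq : Finset.univ.image (fun x : GF (2*m) => x + x ^ 2 ^ m) = Km m :=
    Finset.eq_of_subset_of_card_le hsub (by rw [hc1, hc2])
  rw [← heq] at ht
  obtain ⟨v, _, hv⟩ := Finset.mem_image.mp ht
  exact ⟨v, hv⟩

lemma fiber_card (hm : 1 ≤ m) {t : GF (2*m)} (ht : t ∈ Km m) :
    (Finset.univ.filter (fun x : GF (2*m) => x + x ^ 2 ^ m = t)).card = 2 ^ m := by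
  obtain ⟨v, hv⟩ := T_surj hm ht
  rw [Finset.card_eq_sum_ones, fiber_sum (fun _ => 1) hv, ← Finset.card_eq_sum_ones, Km_card hm]

lemma exists_tr_one (hm : 1 ≤ m) : ∃ v : GF (2*m), v ^ 2 ^ m = v ∧ trKm m v = 1 := by
  classical
  by_contra hcon
  push_neg at hcon
  have hall : ∀ v : GF (2*m), v ^ 2 ^ m = v → trKm m v = 0 := fun v hv =>
    (trKm_01 hv).resolve_right (hcon v hv)
  set Q : Polynomial (GF (2*m)) := ∑ j ∈ Finset.range m, Polynomial.X ^ (2^j) with hQ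
  have hQcoeff : Q.coeff 1 = 1 := by
    rw [hQ, Polynomial.finset_sum_coeff]
    rw [Finset.sum_eq_single 0]
    · simp
    · intro j _ hj0
      rw [Polynomial.coeff_X_pow]
      have h1 : 2 ^ j ≠ 1 := (Nat.one_lt_two_pow (by omega)).ne'
      rw [if_neg (fun he => h1 he.symm)]
    · intro h0; exact absurd (Finset.mem_range.mpr (by omega)) h0
  have hQ0 : Q ≠ 0 := fun h => by simp [h] at hQcoeff
  have hdeg : Q.natDegree ≤ 2 ^ (m-1) := by
    apply Polynomial.natDegree_sum_le_of_forall_le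
    intro j hj
    rw [Polynomial.natDegree_X_pow]
    have := Finset.mem_range.mp hj
    exact Nat.pow_le_pow_right (by norm_num) (by omega)
  have hroots : Km m ⊆ Q.roots.toFinset := by
    intro x hx
    rw [Multiset.mem_toFinset, Polynomial.mem_roots']
    refine ⟨hQ0, ?_⟩
    have heval : Q.eval x = trKm m x := by
      simp [hQ, trKm, Polynomial.eval_finset_sum]
    rw [Polynomial.IsRoot, heval]
    exact hall x (mem_Km.mp hx)
  have hcon2 : (2:ℕ) ^ m ≤ 2 ^ (m-1) := by
    calc (2:ℕ) ^ m = (Km m).card := (Km_card hm).symm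
      _ ≤ Q.roots.toFinset.card := Finset.card_le_card hroots
      _ ≤ Multiset.card Q.roots := Multiset.toFinset_card_le _
      _ ≤ Q.natDegree := Q.card_roots'
      _ ≤ 2 ^ (m-1) := hdeg
  have : (2:ℕ) ^ (m-1) < 2 ^ m := Nat.pow_lt_pow_right one_lt_two (by omega)
  omega

lemma char_sum (hm : 1 ≤ m) {b : GF (2*m)} (hb : b ^ 2 ^ m = b) (hb0 : b ≠ 0) :
    ∑ u ∈ Km m, chi (2*m) (trKm m (b * u)) = 0 := by
  obtain ⟨v0, hv0K, hv01⟩ := exists_tr_one hm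
  set u1 := b⁻¹ * v0 with hu1
  have hbinv : (b⁻¹) ^ 2 ^ m = b⁻¹ := by rw [inv_pow, hb]
  have hu1K : u1 ^ 2 ^ m = u1 := Km_mul hbinv hv0K
  have htr : trKm m (b * u1) = 1 := by
    rw [hu1, ← mul_assoc, mul_inv_cancel₀ hb0, one_mul]; exact hv01
  have hre : ∑ u ∈ Km m, chi (2*m) (trKm m (b * u))
      = ∑ u ∈ Km m, chi (2*m) (trKm m (b * (u + u1))) := by
    apply Finset.sum_nbij' (i := fun u => u + u1) (j := fun u => u + u1)
    · intro u hu; exact mem_Km.mpr (Km_add (mem_Km.mp hu) hu1K)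
    · intro u hu; exact mem_Km.mpr (Km_add (mem_Km.mp hu) hu1K)
    · intro u _; linear_combination self_add_self u1
    · intro u _; linear_combination self_add_self u1
    · intro u _
      congr 2
      linear_combination (-b : GF (2*m)) * self_add_self u1
  have hneg : ∀ u ∈ Km m, chi (2*m) (trKm m (b * (u + u1)))
      = - chi (2*m) (trKm m (b * u)) := by
    intro u hu
    have huK := mem_Km.mp hu
    have hsplit : b * (u + u1) = b * u + b * u1 := by ring
    rw [hsplit, trKm_add, htr]
    have h01 := trKm_01 (Km_mul hb huK)
    have h1 : (1 : GF (2*m)) ≠ 0 := one_ne_zero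
    rcases h01 with h0 | h0 <;> rw [h0] <;> simp [chi, one_add_one, h1]
  rw [Finset.sum_congr rfl hneg, Finset.sum_neg_distrib] at hre
  linarith

end Stmt0Aux

namespace Stmt0Aux
variable {m : ℕ}

lemma atr_a_part {a c t x : GF (2*m)} (haK : a ^ 2 ^ m = a) (hcK : c ^ 2 ^ m = c)
    (e : ℕ) (hxt : x + x ^ 2 ^ m = t) :
    atr (2*m) (a * (x ^ 2 ^ e * c)) = trKm m (a * (t ^ 2 ^ e * c)) := by
  rw [atr_eq]
  congr 1
  rw [mul_pow, mul_pow, haK, hcK, ← hxt, frob_add, pow_right_comm x (2^e) (2^m)]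
  ring

lemma atr_omega_Km {ω t x : GF (2*m)} (hω : ω ^ 2 ^ m = ω) (hxt : x + x ^ 2 ^ m = t) :
    atr (2*m) (ω * x) = trKm m (ω * t) := by
  rw [atr_eq]
  congr 1
  rw [mul_pow, hω, ← hxt]
  ring

lemma atr_omega_u (ω : GF (2*m)) {u : GF (2*m)} (huK : u ^ 2 ^ m = u) :
    atr (2*m) (ω * u) = trKm m ((ω + ω ^ 2 ^ m) * u) := by
  rw [atr_eq]
  congr 1
  rw [mul_pow, huK]
  ring

end Stmt0Aux


open Stmt0Aux

/-- For `F(x) = x^(2^e)·h(Tr_{2^n/2^m}(x))` with `h` a bijection of `K_m`,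
and `a ∈ K_m, a ≠ 0`: `W_{F_a}(ω) = 2^m·W_{H_a}(ω)` if `ω ∈ K_m`, and `= 0` otherwise,
where `H_a(x) = Tr_{2^m/2}(a·x^(2^e)·h(x))` on `K_m`. -/
theorem stmt0 (m : ℕ) (hm : 1 ≤ m) (e : ℕ)
    (h : GF (2*m) → GF (2*m))
    (hbij : Set.BijOn h {x : GF (2*m) | x ^ 2 ^ m = x} {x : GF (2*m) | x ^ 2 ^ m = x})
    (a : GF (2*m)) (haK : a ^ 2 ^ m = a) (ha0 : a ≠ 0) (ω : GF (2*m)) :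
    (ω ^ 2 ^ m = ω →
      walsh (2*m) (fun x => atr (2*m) (a * (x ^ 2 ^ e * h (x + x ^ 2 ^ m)))) ω
        = 2 ^ m * ∑ x ∈ Km m,
            chi (2*m) (trKm m (a * (x ^ 2 ^ e * h x)) + trKm m (ω * x))) ∧
    (ω ^ 2 ^ m ≠ ω →
      walsh (2*m) (fun x => atr (2*m) (a * (x ^ 2 ^ e * h (x + x ^ 2 ^ m)))) ω = 0) := by
  have hmaps : ∀ x ∈ (Finset.univ : Finset (GF (2*m))), x + x ^ 2 ^ m ∈ Km m :=
    fun x _ => mem_Km.mpr (T_mem hm x)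
  have hwalsh : walsh (2*m) (fun x => atr (2*m) (a * (x ^ 2 ^ e * h (x + x ^ 2 ^ m)))) ω
      = ∑ t ∈ Km m, ∑ x ∈ Finset.univ.filter (fun x : GF (2*m) => x + x ^ 2 ^ m = t),
          chi (2*m) (atr (2*m) (a * (x ^ 2 ^ e * h (x + x ^ 2 ^ m))) + atr (2*m) (ω * x)) := by
    rw [walsh]
    exact (Finset.sum_fiberwise_of_maps_to hmaps _).symm
  constructor
  · intro hω
    rw [hwalsh, Finset.mul_sum]
    apply Finset.sum_congr rfl
    intro t ht
    have htK : t ^ 2 ^ m = t := mem_Km.mp ht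
    have hht : (h t) ^ 2 ^ m = h t := hbij.mapsTo htK
    have hconst : ∀ x ∈ Finset.univ.filter (fun x : GF (2*m) => x + x ^ 2 ^ m = t),
        chi (2*m) (atr (2*m) (a * (x ^ 2 ^ e * h (x + x ^ 2 ^ m))) + atr (2*m) (ω * x))
          = chi (2*m) (trKm m (a * (t ^ 2 ^ e * h t)) + trKm m (ω * t)) := by
      intro x hx
      have hxt : x + x ^ 2 ^ m = t := (Finset.mem_filter.mp hx).2
      rw [hxt, atr_a_part haK hht e hxt, atr_omega_Km hω hxt]
    rw [Finset.sum_congr rfl hconst, Finset.sum_const, fiber_card hm ht, nsmul_eq_mul]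
    push_cast
    ring
  · intro hω
    rw [hwalsh]
    apply Finset.sum_eq_zero
    intro t ht
    have htK : t ^ 2 ^ m = t := mem_Km.mp ht
    have hht : (h t) ^ 2 ^ m = h t := hbij.mapsTo htK
    obtain ⟨v, hv⟩ := T_surj hm ht
    rw [fiber_sum _ hv]
    have hbK : (ω + ω ^ 2 ^ m) ^ 2 ^ m = ω + ω ^ 2 ^ m := T_mem hm ω
    have hb0 : ω + ω ^ 2 ^ m ≠ 0 := by
      intro h0
      apply hω
      linear_combination h0 - self_add_self ω
    have hs01 : trKm m (a * (t ^ 2 ^ e * h t)) + atr (2*m) (ω * v) = 0 ∨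
        trKm m (a * (t ^ 2 ^ e * h t)) + atr (2*m) (ω * v) = 1 :=
      add_01 (trKm_01 (Km_mul haK (Km_mul (Km_pow e htK) hht))) (atr_01 hm _)
    have hterm : ∀ u ∈ Km m,
        chi (2*m) (atr (2*m)
            (a * ((v + u) ^ 2 ^ e * h ((v + u) + (v + u) ^ 2 ^ m))) + atr (2*m) (ω * (v + u)))
          = chi (2*m) (trKm m (a * (t ^ 2 ^ e * h t)) + atr (2*m) (ω * v))
              * chi (2*m) (trKm m ((ω + ω ^ 2 ^ m) * u)) := by
      intro u hu
      have huK := mem_Km.mp hu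
      have hTu : (v + u) + (v + u) ^ 2 ^ m = t := by
        rw [frob_add, huK]
        linear_combination hv + self_add_self u
      have hB : atr (2*m) (ω * (v + u)) = atr (2*m) (ω * v) + trKm m ((ω + ω ^ 2 ^ m) * u) := by
        have hsplit : ω * (v + u) = ω * v + ω * u := by ring
        rw [hsplit, atr_add, atr_omega_u ω huK]
      rw [hTu, atr_a_part haK hht e hTu, hB, ← add_assoc,
        chi_add hs01 (trKm_01 (Km_mul hbK huK))]
    rw [Finset.sum_congr rfl hterm, ← Finset.mul_sum, char_sum hm hbK hb0, mul_zero]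
end
end

section
/- Let e ≥ 0 be an integer and let h be a bijection of K_m. Define F : F_{2^n} → F_{2^n} by F(x) = x^{2^e}·h(Tr_{2^n/2^m}(x)), and for a ∈ K_m, a ≠ 0, define the Boolean function H_a on K_m by H_a(x) = Tr_{2^m/2}(a·x^{2^e}·h(x)) with Walsh transform W_{H_a}(ω) = Σ_{x∈K_m} (−1)^{H_a(x)+Tr_{2^m/2}(ωx)} for ω ∈ K_m. Then the maximum of |W_{F_a}(ω)| over all a ∈ F_{2^n}, a ≠ 0, and all ω ∈ F_{2^n} equals 2^m times the maximum of |W_{H_a}(ω)| over all a ∈ K_m, a ≠ 0, and all ω ∈ K_m; equivalently, N_F = 2^{n−1} − 2^{m−1}·max_{a∈K_m, a≠0, ω∈K_m} |W_{H_a}(ω)|. -/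
open scoped Classical BigOperators

noncomputable section

lemma frob_add (k l : ℕ) (x y : GF k) : (x + y) ^ 2 ^ l = x ^ 2 ^ l + y ^ 2 ^ l :=
  add_pow_char_pow x y 2 l

lemma gf_add_self (k : ℕ) (x : GF k) : x + x = 0 := CharTwo.add_self_eq_zero x

lemma gf_add_eq_zero_iff (k : ℕ) (x y : GF k) : x + y = 0 ↔ x = y := by
  constructor
  · intro hxy
    have : x + y + y = y := by rw [hxy]; ring
    rwa [add_assoc, gf_add_self, add_zero] at this
  · rintro rfl; exact gf_add_self k x

section
variable {m : ℕ}

lemma card_K (hm : 1 ≤ m) : Fintype.card (GF (2*m)) = 2 ^ (2*m) := by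
  have := GaloisField.card 2 (2*m) (by omega)
  simpa [Nat.card_eq_fintype_card] using this

lemma pow_qq (hm : 1 ≤ m) (x : GF (2*m)) : (x ^ 2 ^ m) ^ 2 ^ m = x := by
  rw [← pow_mul, ← pow_add, ← two_mul, ← card_K hm]
  exact FiniteField.pow_card x

lemma mem_Km {x : GF (2*m)} : x ∈ Km m ↔ x ^ 2 ^ m = x := by
  simp [Km]

lemma zero_mem_Km : (0 : GF (2*m)) ∈ Km m := by
  rw [mem_Km]
  exact zero_pow (by positivity)

lemma one_mem_Km : (1 : GF (2*m)) ∈ Km m := by simp [mem_Km]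

lemma mul_mem_Km {x y : GF (2*m)} (hx : x ∈ Km m) (hy : y ∈ Km m) : x * y ∈ Km m := by
  rw [mem_Km] at *
  rw [mul_pow, hx, hy]

lemma add_mem_Km {x y : GF (2*m)} (hx : x ∈ Km m) (hy : y ∈ Km m) : x + y ∈ Km m := by
  rw [mem_Km] at *
  rw [frob_add, hx, hy]

lemma pow2_mem_Km {x : GF (2*m)} (hx : x ∈ Km m) (l : ℕ) : x ^ 2 ^ l ∈ Km m := by
  rw [mem_Km] at *
  rw [pow_right_comm, hx]

lemma inv_mem_Km {x : GF (2*m)} (hx : x ∈ Km m) : x⁻¹ ∈ Km m := by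
  rw [mem_Km] at *
  rw [inv_pow, hx]

end

/-- The relative trace `x + x^(2^m)` from `GF (2*m)` onto `K_m`. -/
def Tm (m : ℕ) (x : GF (2*m)) : GF (2*m) := x + x ^ 2 ^ m

section
variable {m : ℕ}

lemma Tm_mem_Km (hm : 1 ≤ m) (x : GF (2*m)) : Tm m x ∈ Km m := by
  rw [mem_Km, Tm, frob_add, pow_qq hm, add_comm]

lemma Tm_eq_zero_iff (x : GF (2*m)) : Tm m x = 0 ↔ x ∈ Km m := by
  rw [Tm, mem_Km, gf_add_eq_zero_iff, eq_comm]

lemma Tm_mul_right {s : GF (2*m)} (hs : s ∈ Km m) (c : GF (2*m)) :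
    Tm m (c * s) = Tm m c * s := by
  rw [mem_Km] at hs
  rw [Tm, Tm, mul_pow, hs]; ring

lemma Tm_add (x y : GF (2*m)) : Tm m (x + y) = Tm m x + Tm m y := by
  rw [Tm, Tm, Tm, frob_add]; ring

lemma Tm_pow2 (x : GF (2*m)) (l : ℕ) : Tm m (x ^ 2 ^ l) = (Tm m x) ^ 2 ^ l := by
  rw [Tm, Tm, frob_add, pow_right_comm]

lemma atr_eq (x : GF (2*m)) : atr (2*m) x = trKm m (Tm m x) := by
  have hr : Finset.range (2*m) = Finset.range (m+m) := by rw [two_mul]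
  rw [atr, trKm, hr, Finset.sum_range_add, ← Finset.sum_add_distrib]
  apply Finset.sum_congr rfl
  intro j _
  rw [Tm, frob_add, pow_right_comm x (2^m), ← pow_mul, ← pow_add, Nat.add_comm m j]

lemma trKm_add (x y : GF (2*m)) : trKm m (x + y) = trKm m x + trKm m y := by
  rw [trKm, trKm, trKm, ← Finset.sum_add_distrib]
  exact Finset.sum_congr rfl fun j _ => frob_add _ j x y

lemma trKm_zero : trKm m 0 = 0 := by
  rw [trKm]
  apply Finset.sum_eq_zero
  intro j _
  exact zero_pow (by positivity)

lemma trKm_pow_two (x : GF (2*m)) : (trKm m x) ^ 2 = trKm m (x ^ 2) := by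
  have h : (trKm m x) ^ 2 = frobenius (GF (2*m)) 2 (trKm m x) := rfl
  rw [h, trKm, map_sum, trKm]
  apply Finset.sum_congr rfl
  intro j _
  show (x ^ 2 ^ j) ^ 2 = (x ^ 2) ^ 2 ^ j
  rw [← pow_mul, ← pow_mul, mul_comm (2^j) 2]

lemma trKm_sq {x : GF (2*m)} (hx : x ∈ Km m) : trKm m (x ^ 2) = trKm m x := by
  have key : ∑ j ∈ Finset.range (m+1), x ^ 2 ^ j
      = (∑ j ∈ Finset.range m, x ^ 2 ^ (j+1)) + x ^ 2 ^ 0 := Finset.sum_range_succ' _ m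
  have key2 : ∑ j ∈ Finset.range (m+1), x ^ 2 ^ j
      = (∑ j ∈ Finset.range m, x ^ 2 ^ j) + x ^ 2 ^ m := Finset.sum_range_succ _ m
  have e1 : trKm m (x ^ 2) = ∑ j ∈ Finset.range m, x ^ 2 ^ (j+1) := by
    rw [trKm]
    apply Finset.sum_congr rfl
    intro j _
    rw [← pow_mul, pow_succ, mul_comm (2^j) 2, pow_mul]
  rw [mem_Km] at hx
  have key3 := key.symm.trans key2
  rw [hx, pow_zero, pow_one] at key3
  rw [e1]
  exact add_right_cancel key3

lemma trKm_pow2e {x : GF (2*m)} (hx : x ∈ Km m) (l : ℕ) :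
    trKm m (x ^ 2 ^ l) = trKm m x := by
  induction l with
  | zero => rw [pow_zero, pow_one]
  | succ l ih =>
      have : x ^ 2 ^ (l+1) = (x ^ 2 ^ l) ^ 2 := by
        rw [← pow_mul, pow_succ]
      rw [this, trKm_sq (pow2_mem_Km hx l), ih]

lemma trKm_mem01 {x : GF (2*m)} (hx : x ∈ Km m) : trKm m x = 0 ∨ trKm m x = 1 := by
  set t := trKm m x with ht
  have h2 : t ^ 2 = t := by
    rw [ht, trKm_pow_two, trKm_sq hx]
  have h3 : t * (t - 1) = 0 := by linear_combination h2
  rcases mul_eq_zero.mp h3 with h | h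
  · left; exact h
  · right; exact sub_eq_zero.mp h

lemma add_mem01 {x y : GF (2*m)} (hx : x = 0 ∨ x = 1) (hy : y = 0 ∨ y = 1) :
    x + y = 0 ∨ x + y = 1 := by
  rcases hx with rfl | rfl <;> rcases hy with rfl | rfl <;> simp [gf_add_self]

lemma chi_zero (k : ℕ) : chi k 0 = 1 := if_pos rfl

lemma chi_one (k : ℕ) : chi k 1 = -1 := if_neg one_ne_zero

lemma chi_add {k : ℕ} {x y : GF k} (hx : x = 0 ∨ x = 1) (hy : y = 0 ∨ y = 1) :
    chi k (x + y) = chi k x * chi k y := by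
  rcases hx with rfl | rfl <;> rcases hy with rfl | rfl <;>
    simp [chi, gf_add_self, one_ne_zero]

end

section
variable {m : ℕ}
open Polynomial

lemma card_le_of_roots {P : Polynomial (GF (2*m))} (hP : P ≠ 0) {s : Finset (GF (2*m))}
    (h : ∀ x ∈ s, P.eval x = 0) : s.card ≤ P.natDegree := by
  have hsub : s ⊆ P.roots.toFinset := fun x hx => by
    rw [Multiset.mem_toFinset, Polynomial.mem_roots hP]
    exact h x hx
  calc s.card ≤ P.roots.toFinset.card := Finset.card_le_card hsub
    _ ≤ Multiset.card P.roots := Multiset.toFinset_card_le _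
    _ ≤ P.natDegree := Polynomial.card_roots' P

lemma card_Km_le (hm : 1 ≤ m) : (Km m).card ≤ 2 ^ m := by
  set P : Polynomial (GF (2*m)) := X ^ 2 ^ m + X with hPdef
  have hP : P ≠ 0 := by
    intro h0
    have : P.coeff (2^m) = 1 := by
      rw [hPdef, coeff_add, coeff_X_pow, coeff_X]
      have h1 : (2:ℕ)^m ≠ 1 := by
        have : (2:ℕ) ≤ 2^m := by
          calc (2:ℕ) = 2^1 := (pow_one 2).symm
            _ ≤ 2^m := Nat.pow_le_pow_right (by norm_num) hm
        omega
      simp [h1.symm]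
    rw [h0] at this
    simp at this
  have hdeg : P.natDegree ≤ 2 ^ m := by
    calc P.natDegree ≤ max (X ^ 2^m : Polynomial (GF (2*m))).natDegree (X : Polynomial (GF (2*m))).natDegree :=
          Polynomial.natDegree_add_le _ _
      _ ≤ 2 ^ m := by
          rw [natDegree_X_pow, natDegree_X]
          have : (1:ℕ) ≤ 2^m := Nat.one_le_two_pow
          omega
  have hroots : ∀ x ∈ Km m, P.eval x = 0 := by
    intro x hx
    rw [mem_Km] at hx
    rw [hPdef]
    simp only [eval_add, eval_pow, eval_X]
    rw [hx]
    exact gf_add_self _ x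
  exact le_trans (card_le_of_roots hP hroots) hdeg

/-- The trace map as an additive hom. -/
def Thom (m : ℕ) : GF (2*m) →+ GF (2*m) := AddMonoidHom.mk' (Tm m) (Tm_add)

lemma Tm_counting (hm : 1 ≤ m) :
    (Km m).card = 2 ^ m ∧ (Set.range (Tm m) = {x : GF (2*m) | x ^ 2 ^ m = x}) := by
  have hKmset : ((Thom m).ker : Set (GF (2*m))) = ↑(Km m) := by
    ext x
    show Tm m x = 0 ↔ x ∈ Km m
    exact Tm_eq_zero_iff x
  have hcard_ker : Nat.card ((Thom m).ker) = (Km m).card := by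
    rw [← Set.ncard_coe_finset, ← hKmset]
    exact Nat.card_coe_set_eq _
  have hrange_sub : (Set.range (Tm m)) ⊆ ↑(Km m) := by
    rintro _ ⟨x, rfl⟩
    exact Tm_mem_Km hm x
  have hrange_eq : ((Thom m).range : Set (GF (2*m))) = Set.range (Tm m) := by
    ext x; simp [AddMonoidHom.mem_range, Thom]
  have hcard_range_le : Nat.card ((Thom m).range) ≤ (Km m).card := by
    rw [show Nat.card ((Thom m).range) = ((Thom m).range : Set (GF (2*m))).ncard from
      Nat.card_coe_set_eq _, ← Set.ncard_coe_finset]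
    apply Set.ncard_le_ncard _ (Finset.finite_toSet _)
    rw [hrange_eq]; exact hrange_sub
  have htot : Nat.card (GF (2*m)) = Nat.card ((Thom m).range) * Nat.card ((Thom m).ker) := by
    rw [AddSubgroup.card_eq_card_quotient_mul_card_addSubgroup ((Thom m).ker)]
    congr 1
    exact Nat.card_congr (QuotientAddGroup.quotientKerEquivRange (Thom m)).toEquiv
  have hcardK : Nat.card (GF (2*m)) = 2 ^ m * 2 ^ m := by
    rw [Nat.card_eq_fintype_card, card_K hm, two_mul, pow_add]
  have hker_le : (Km m).card ≤ 2 ^ m := card_Km_le hm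
  -- ck ≥ 2^m
  have hck : (Km m).card = 2 ^ m := by
    have h1 : 2^m * 2^m ≤ 2^m * (Km m).card := by
      rw [← hcardK, htot, hcard_ker]
      exact Nat.mul_le_mul_right _ (le_trans hcard_range_le hker_le)
    have := Nat.le_of_mul_le_mul_left h1 (by positivity)
    omega
  have hcr : Nat.card ((Thom m).range) = 2 ^ m := by
    have : 2^m * 2^m = Nat.card ((Thom m).range) * 2^m := by
      rw [← hcardK, htot, hcard_ker, hck]
    have h2 := Nat.eq_of_mul_eq_mul_right (show 0 < 2^m by positivity) this.symm
    exact h2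
  refine ⟨hck, ?_⟩
  have hsetKm : ({x : GF (2*m) | x ^ 2 ^ m = x} : Set (GF (2*m))) = ↑(Km m) := by
    ext x; simp [Km]
  rw [hsetKm]
  apply Set.eq_of_subset_of_ncard_le hrange_sub _ (Finset.finite_toSet _)
  have hh : Nat.card ((Thom m).range) = ((Thom m).range : Set (GF (2*m))).ncard :=
    Nat.card_coe_set_eq _
  rw [Set.ncard_coe_finset, hck, ← hrange_eq, ← hh, hcr]

lemma card_Km (hm : 1 ≤ m) : (Km m).card = 2 ^ m := (Tm_counting hm).1

lemma exists_delta (hm : 1 ≤ m) : ∃ δ : GF (2*m), Tm m δ = 1 := by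
  have h1 : (1 : GF (2*m)) ∈ Set.range (Tm m) := by
    rw [(Tm_counting hm).2]
    simp
  exact h1

lemma exists_tr_one (hm : 1 ≤ m) : ∃ u ∈ Km m, trKm m u = 1 := by
  by_contra hcon
  push_neg at hcon
  have hall : ∀ u ∈ Km m, trKm m u = 0 := by
    intro u hu
    rcases trKm_mem01 hu with h | h
    · exact h
    · exact absurd h (hcon u hu)
  set Q : Polynomial (GF (2*m)) := ∑ j ∈ Finset.range m, X ^ 2 ^ j with hQdef
  have hQcoeff : Q.coeff (2^(m-1)) = 1 := by
    rw [hQdef, finset_sum_coeff]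
    rw [Finset.sum_eq_single (m-1)]
    · rw [coeff_X_pow]; simp
    · intro j hj hne
      rw [coeff_X_pow]
      have h1 : 2 ^ (m-1) ≠ 2 ^ j := fun hh => hne (Nat.pow_right_injective (le_refl 2) hh.symm)
      have h2 : 2 ^ j ≠ 2 ^ (m-1) := fun hh => h1 hh.symm
      simp [h1, h2]
    · intro hmem
      exfalso; apply hmem
      rw [Finset.mem_range]; omega
  have hQ : Q ≠ 0 := by
    intro h0; rw [h0] at hQcoeff; simp at hQcoeff
  have hQdeg : Q.natDegree ≤ 2 ^ (m-1) := by
    apply Polynomial.natDegree_sum_le_of_forall_le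
    intro j hj
    rw [natDegree_X_pow]
    exact Nat.pow_le_pow_right (by norm_num) (by rw [Finset.mem_range] at hj; omega)
  have hroots : ∀ x ∈ Km m, Q.eval x = 0 := by
    intro x hx
    have := hall x hx
    rw [trKm] at this
    rw [hQdef, eval_finset_sum]
    simpa using this
  have := le_trans (card_le_of_roots hQ hroots) hQdeg
  rw [card_Km hm] at this
  have h2 : 2^m = 2 * 2^(m-1) := by
    rw [← pow_succ']
    congr 1
    omega
  have hb : 1 ≤ 2^(m-1) := Nat.one_le_two_pow
  omega

end

section
variable {m : ℕ}

lemma charSum (hm : 1 ≤ m) {γ : GF (2*m)} (hγ : γ ∈ Km m) :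
    ∑ w ∈ Km m, chi (2*m) (trKm m (w * γ)) = if γ = 0 then (2:ℤ)^m else 0 := by
  by_cases h0 : γ = 0
  · subst h0
    rw [if_pos rfl]
    have hterm : ∀ w ∈ Km m, chi (2*m) (trKm m (w * 0)) = 1 := by
      intro w _
      rw [mul_zero, trKm_zero, chi_zero]
    rw [Finset.sum_congr rfl hterm, Finset.sum_const, card_Km hm, nsmul_eq_mul, mul_one]
    push_cast
    ring
  · rw [if_neg h0]
    have step1 : ∑ w ∈ Km m, chi (2*m) (trKm m (w * γ)) = ∑ w ∈ Km m, chi (2*m) (trKm m w) := by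
      apply Finset.sum_nbij' (fun w => w * γ) (fun w => w * γ⁻¹)
      · intro w hw; exact mul_mem_Km hw hγ
      · intro w hw; exact mul_mem_Km hw (inv_mem_Km hγ)
      · intro w _; rw [mul_assoc, mul_inv_cancel₀ h0, mul_one]
      · intro w _; rw [mul_assoc, inv_mul_cancel₀ h0, mul_one]
      · intro w _; rfl
    rw [step1]
    obtain ⟨u, hu, hu1⟩ := exists_tr_one hm
    have step3 : ∀ w ∈ Km m, chi (2*m) (trKm m (w + u)) = - chi (2*m) (trKm m w) := by
      intro w hw
      rw [trKm_add, hu1, chi_add (trKm_mem01 hw) (Or.inr rfl), chi_one]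
      ring
    have step2 : ∑ w ∈ Km m, chi (2*m) (trKm m w)
        = ∑ w ∈ Km m, chi (2*m) (trKm m (w + u)) := by
      apply Finset.sum_nbij' (fun w => w + u) (fun w => w + u)
      · intro w hw; exact add_mem_Km hw hu
      · intro w hw; exact add_mem_Km hw hu
      · intro w _; rw [add_assoc, gf_add_self, add_zero]
      · intro w _; rw [add_assoc, gf_add_self, add_zero]
      · intro w hw
        congr 1
        rw [add_assoc, gf_add_self, add_zero]
    have step4 : ∑ w ∈ Km m, chi (2*m) (trKm m (w + u))
        = - ∑ w ∈ Km m, chi (2*m) (trKm m w) := by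
      rw [Finset.sum_congr rfl step3, Finset.sum_neg_distrib]
    have := step2.trans step4
    linarith

lemma frob_surj (e : ℕ) : ∀ w ∈ Km m, ∃ v, ∃ _ : v ∈ Km m, v ^ 2 ^ e = w := by
  have hinj : ∀ (a b : GF (2*m)), a ^ 2 ^ e = b ^ 2 ^ e → a = b := by
    intro a b hab
    have h1 : (a + b) ^ 2 ^ e = 0 := by
      rw [frob_add, hab, gf_add_self]
    have h2 : a + b = 0 := pow_eq_zero_iff (by positivity) |>.mp h1
    exact (gf_add_eq_zero_iff _ a b).mp h2
  intro w hw
  obtain ⟨v, hv, heq⟩ := Finset.surj_on_of_inj_on_of_card_le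
    (fun (a : GF (2*m)) (_ : a ∈ Km m) => a ^ 2 ^ e)
    (fun a ha => pow2_mem_Km ha e)
    (fun a b ha hb hab => hinj a b hab)
    (le_refl _) w hw
  exact ⟨v, hv, heq.symm⟩

lemma innerSum (hm : 1 ≤ m) (e : ℕ) {γ₁ γ₂ : GF (2*m)}
    (h1 : γ₁ ∈ Km m) (h2 : γ₂ ∈ Km m) :
    ∑ v ∈ Km m, chi (2*m) (trKm m (v ^ 2 ^ e * γ₁) + trKm m (v * γ₂))
      = if γ₁ + γ₂ ^ 2 ^ e = 0 then (2:ℤ)^m else 0 := by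
  have key : ∀ v ∈ Km m, chi (2*m) (trKm m (v ^ 2 ^ e * γ₁) + trKm m (v * γ₂))
      = chi (2*m) (trKm m (v ^ 2 ^ e * (γ₁ + γ₂ ^ 2 ^ e))) := by
    intro v hv
    have hv2 : v * γ₂ ∈ Km m := mul_mem_Km hv h2
    have h3 : trKm m (v * γ₂) = trKm m (v ^ 2 ^ e * γ₂ ^ 2 ^ e) := by
      rw [← mul_pow, trKm_pow2e hv2 e]
    rw [h3, ← trKm_add, mul_add]
  rw [Finset.sum_congr rfl key]
  have hsum : ∑ v ∈ Km m, chi (2*m) (trKm m (v ^ 2 ^ e * (γ₁ + γ₂ ^ 2 ^ e)))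
      = ∑ w ∈ Km m, chi (2*m) (trKm m (w * (γ₁ + γ₂ ^ 2 ^ e))) := by
    apply Finset.sum_bij (fun (v : GF (2*m)) (_ : v ∈ Km m) => v ^ 2 ^ e)
    · intro a ha; exact pow2_mem_Km ha e
    · intro a ha b hb hab
      have h1' : (a + b) ^ 2 ^ e = 0 := by rw [frob_add, hab, gf_add_self]
      have h2' : a + b = 0 := pow_eq_zero_iff (by positivity) |>.mp h1'
      exact (gf_add_eq_zero_iff _ a b).mp h2'
    · intro b hb
      exact frob_surj e b hb
    · intro a _; rfl
  rw [hsum]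
  exact charSum hm (add_mem_Km h1 (pow2_mem_Km h2 e))

end

section
variable {m : ℕ}

lemma atr_add (x y : GF (2*m)) : atr (2*m) (x + y) = atr (2*m) x + atr (2*m) y := by
  rw [atr_eq, atr_eq, atr_eq, Tm_add, trKm_add]

lemma atr_mul {s : GF (2*m)} (hs : s ∈ Km m) (c : GF (2*m)) :
    atr (2*m) (c * s) = trKm m (s * Tm m c) := by
  rw [atr_eq, Tm_mul_right hs]
  exact congrArg (trKm m) (mul_comm _ _)

lemma walsh_eq (hm : 1 ≤ m) (e : ℕ) (h : GF (2*m) → GF (2*m))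
    (hKmh : ∀ t ∈ Km m, h t ∈ Km m)
    {δ : GF (2*m)} (hδ : Tm m δ = 1) (a ω : GF (2*m)) :
    walsh (2*m) (fun x => atr (2*m) (a * (x ^ 2 ^ e * h (x + x ^ 2 ^ m)))) ω
      = ∑ t ∈ Km m, chi (2*m) (trKm m (t ^ 2 ^ e * (h t * Tm m (a * δ ^ 2 ^ e)))
            + trKm m (t * Tm m (ω * δ)))
          * (if h t * Tm m a + (Tm m ω) ^ 2 ^ e = 0 then (2:ℤ)^m else 0) := by
  have hTmv : ∀ v ∈ Km m, Tm m v = 0 := fun v hv => (Tm_eq_zero_iff v).mpr hv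
  have hT : ∀ t ∈ Km m, ∀ v ∈ Km m, Tm m (δ * t + v) = t := by
    intro t ht v hv
    rw [Tm_add, Tm_mul_right ht, hδ, one_mul, hTmv v hv, add_zero]
  rw [walsh]
  have reindex : ∑ x : GF (2*m), chi (2*m)
        (atr (2*m) (a * (x ^ 2 ^ e * h (x + x ^ 2 ^ m))) + atr (2*m) (ω * x))
      = ∑ p ∈ (Km m) ×ˢ (Km m), chi (2*m)
          (atr (2*m) (a * ((δ * p.1 + p.2) ^ 2 ^ e
              * h ((δ * p.1 + p.2) + (δ * p.1 + p.2) ^ 2 ^ m)))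
            + atr (2*m) (ω * (δ * p.1 + p.2))) := by
    apply Finset.sum_nbij' (fun x => (Tm m x, x + δ * Tm m x)) (fun p => δ * p.1 + p.2)
    · intro x _
      rw [Finset.mem_product]
      refine ⟨Tm_mem_Km hm x, ?_⟩
      rw [← Tm_eq_zero_iff, Tm_add, Tm_mul_right (Tm_mem_Km hm x), hδ, one_mul, gf_add_self]
    · intro p _; exact Finset.mem_univ _
    · intro x _
      show δ * Tm m x + (x + δ * Tm m x) = x
      rw [add_comm x, ← add_assoc, gf_add_self, zero_add]
    · intro p hp
      rw [Finset.mem_product] at hp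
      have h1 : Tm m (δ * p.1 + p.2) = p.1 := hT p.1 hp.1 p.2 hp.2
      have h2 : δ * p.1 + p.2 + δ * Tm m (δ * p.1 + p.2) = p.2 := by
        rw [h1, add_comm (δ * p.1) p.2, add_assoc, gf_add_self, add_zero]
      exact Prod.ext h1 h2
    · intro x _
      have hxx : δ * Tm m x + (x + δ * Tm m x) = x := by
        rw [add_comm x, ← add_assoc, gf_add_self, zero_add]
      simp only [hxx]
  rw [reindex, Finset.sum_product]
  apply Finset.sum_congr rfl
  intro t ht
  have hht : h t ∈ Km m := hKmh t ht
  have hTa : Tm m a ∈ Km m := Tm_mem_Km hm a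
  have hTω : Tm m ω ∈ Km m := Tm_mem_Km hm ω
  have hpoint : ∀ v ∈ Km m, chi (2*m)
        (atr (2*m) (a * ((δ * t + v) ^ 2 ^ e
            * h ((δ * t + v) + (δ * t + v) ^ 2 ^ m)))
          + atr (2*m) (ω * (δ * t + v)))
      = chi (2*m) (trKm m (t ^ 2 ^ e * (h t * Tm m (a * δ ^ 2 ^ e)))
            + trKm m (t * Tm m (ω * δ)))
        * chi (2*m) (trKm m (v ^ 2 ^ e * (h t * Tm m a)) + trKm m (v * Tm m ω)) := by
    intro v hv
    have e0 : (δ * t + v) + (δ * t + v) ^ 2 ^ m = t := hT t ht v hv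
    rw [e0]
    have eX : a * ((δ * t + v) ^ 2 ^ e * h t)
        = (a * δ ^ 2 ^ e) * (t ^ 2 ^ e * h t) + (a * h t) * v ^ 2 ^ e := by
      rw [frob_add, mul_pow]; ring
    have eY : ω * (δ * t + v) = (ω * δ) * t + ω * v := by ring
    rw [eX, eY, atr_add, atr_add]
    rw [atr_mul (mul_mem_Km (pow2_mem_Km ht e) hht) (a * δ ^ 2 ^ e)]
    rw [atr_mul (pow2_mem_Km hv e) (a * h t)]
    rw [atr_mul ht (ω * δ), atr_mul hv ω]
    have eTm2 : Tm m (a * h t) = h t * Tm m a := by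
      rw [Tm_mul_right hht a]; ring
    rw [eTm2]
    have eassoc : t ^ 2 ^ e * h t * Tm m (a * δ ^ 2 ^ e)
        = t ^ 2 ^ e * (h t * Tm m (a * δ ^ 2 ^ e)) := by ring
    rw [eassoc]
    rw [add_add_add_comm]
    apply chi_add
    · apply add_mem01
      · exact trKm_mem01 (mul_mem_Km (pow2_mem_Km ht e)
          (mul_mem_Km hht (Tm_mem_Km hm (a * δ ^ 2 ^ e))))
      · exact trKm_mem01 (mul_mem_Km ht (Tm_mem_Km hm (ω * δ)))
    · apply add_mem01
      · exact trKm_mem01 (mul_mem_Km (pow2_mem_Km hv e) (mul_mem_Km hht hTa))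
      · exact trKm_mem01 (mul_mem_Km hv hTω)
  rw [Finset.sum_congr rfl hpoint, ← Finset.mul_sum]
  congr 1
  exact innerSum hm e (mul_mem_Km hht hTa) hTω

end

section
variable {m : ℕ}

lemma chi_natAbs (k : ℕ) (x : GF k) : (chi k x).natAbs = 1 := by
  rw [chi]; split <;> simp

lemma walsh_caseA (hm : 1 ≤ m) (e : ℕ) (h : GF (2*m) → GF (2*m))
    (hKmh : ∀ t ∈ Km m, h t ∈ Km m)
    {δ : GF (2*m)} (hδ : Tm m δ = 1) {a ω : GF (2*m)}
    (ha : a ∈ Km m) (hω : ω ∈ Km m) :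
    walsh (2*m) (fun x => atr (2*m) (a * (x ^ 2 ^ e * h (x + x ^ 2 ^ m)))) ω
      = 2 ^ m * ∑ x ∈ Km m,
          chi (2*m) (trKm m (a * (x ^ 2 ^ e * h x)) + trKm m (ω * x)) := by
  rw [walsh_eq hm e h hKmh hδ a ω]
  have hTa : Tm m a = 0 := (Tm_eq_zero_iff a).mpr ha
  have hTω : Tm m ω = 0 := (Tm_eq_zero_iff ω).mpr hω
  have hTaδ : Tm m (a * δ ^ 2 ^ e) = a := by
    have h1 : a * δ ^ 2 ^ e = δ ^ 2 ^ e * a := mul_comm _ _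
    rw [h1, Tm_mul_right ha, Tm_pow2, hδ, one_pow, one_mul]
  have hTωδ : Tm m (ω * δ) = ω := by
    have h1 : ω * δ = δ * ω := mul_comm _ _
    rw [h1, Tm_mul_right hω, hδ, one_mul]
  have hterm : ∀ t ∈ Km m,
      chi (2*m) (trKm m (t ^ 2 ^ e * (h t * Tm m (a * δ ^ 2 ^ e)))
          + trKm m (t * Tm m (ω * δ)))
        * (if h t * Tm m a + (Tm m ω) ^ 2 ^ e = 0 then (2:ℤ)^m else 0)
      = 2 ^ m * chi (2*m) (trKm m (a * (t ^ 2 ^ e * h t)) + trKm m (ω * t)) := by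
    intro t _
    rw [hTa, hTω, hTaδ, hTωδ, mul_zero, zero_add, zero_pow (by positivity), if_pos rfl]
    rw [show t ^ 2 ^ e * (h t * a) = a * (t ^ 2 ^ e * h t) from by ring,
        show t * ω = ω * t from mul_comm t ω]
    ring
  rw [Finset.sum_congr rfl hterm, ← Finset.mul_sum]

lemma walsh_caseA' (hm : 1 ≤ m) (e : ℕ) (h : GF (2*m) → GF (2*m))
    (hKmh : ∀ t ∈ Km m, h t ∈ Km m)
    {δ : GF (2*m)} (hδ : Tm m δ = 1) {a ω : GF (2*m)}
    (ha : a ∈ Km m) (hω : ω ∉ Km m) :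
    walsh (2*m) (fun x => atr (2*m) (a * (x ^ 2 ^ e * h (x + x ^ 2 ^ m)))) ω = 0 := by
  rw [walsh_eq hm e h hKmh hδ a ω]
  apply Finset.sum_eq_zero
  intro t _
  have hTa : Tm m a = 0 := (Tm_eq_zero_iff a).mpr ha
  have hTω : Tm m ω ≠ 0 := fun h0 => hω ((Tm_eq_zero_iff ω).mp h0)
  rw [hTa, mul_zero, zero_add, if_neg, mul_zero]
  exact pow_ne_zero _ hTω

lemma walsh_caseB (hm : 1 ≤ m) (e : ℕ) (h : GF (2*m) → GF (2*m))
    (hKmh : ∀ t ∈ Km m, h t ∈ Km m)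
    (hbij : Set.BijOn h {x : GF (2*m) | x ^ 2 ^ m = x} {x : GF (2*m) | x ^ 2 ^ m = x})
    {δ : GF (2*m)} (hδ : Tm m δ = 1) {a : GF (2*m)} (ω : GF (2*m))
    (ha : a ∉ Km m) :
    (walsh (2*m) (fun x => atr (2*m) (a * (x ^ 2 ^ e * h (x + x ^ 2 ^ m)))) ω).natAbs
      = 2 ^ m := by
  rw [walsh_eq hm e h hKmh hδ a ω]
  have hTa : Tm m a ≠ 0 := fun h0 => ha ((Tm_eq_zero_iff a).mp h0)
  set z : GF (2*m) := (Tm m ω) ^ 2 ^ e * (Tm m a)⁻¹ with hz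
  have hzK : z ∈ Km m :=
    mul_mem_Km (pow2_mem_Km (Tm_mem_Km hm ω) e) (inv_mem_Km (Tm_mem_Km hm a))
  have hzset : z ∈ ({x : GF (2*m) | x ^ 2 ^ m = x} : Set (GF (2*m))) := mem_Km.mp hzK
  obtain ⟨t₀, ht₀set, ht₀⟩ := hbij.surjOn hzset
  have ht₀K : t₀ ∈ Km m := mem_Km.mpr ht₀set
  have hcond : ∀ t ∈ Km m,
      (h t * Tm m a + (Tm m ω) ^ 2 ^ e = 0) ↔ t = t₀ := by
    intro t htK
    constructor
    · intro hc
      have h1 : h t * Tm m a = (Tm m ω) ^ 2 ^ e := (gf_add_eq_zero_iff _ _ _).mp hc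
      have h2 : h t = z := by
        rw [hz, ← h1]
        field_simp
      exact hbij.injOn (mem_Km.mp htK) ht₀set (h2.trans ht₀.symm)
    · rintro rfl
      rw [ht₀, hz]
      have h1 : (Tm m ω) ^ 2 ^ e * (Tm m a)⁻¹ * Tm m a = (Tm m ω) ^ 2 ^ e := by
        field_simp
      rw [h1]
      exact gf_add_self _ _
  have hterm : ∀ t ∈ Km m,
      chi (2*m) (trKm m (t ^ 2 ^ e * (h t * Tm m (a * δ ^ 2 ^ e)))
          + trKm m (t * Tm m (ω * δ)))
        * (if h t * Tm m a + (Tm m ω) ^ 2 ^ e = 0 then (2:ℤ)^m else 0)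
      = if t = t₀ then chi (2*m) (trKm m (t ^ 2 ^ e * (h t * Tm m (a * δ ^ 2 ^ e)))
          + trKm m (t * Tm m (ω * δ))) * 2 ^ m else 0 := by
    intro t htK
    by_cases hc : t = t₀
    · rw [if_pos hc, if_pos ((hcond t htK).mpr hc)]
    · rw [if_neg hc, if_neg (fun hh => hc ((hcond t htK).mp hh)), mul_zero]
  rw [Finset.sum_congr rfl hterm, Finset.sum_ite_eq' (Km m) t₀]
  rw [if_pos ht₀K, Int.natAbs_mul, chi_natAbs, one_mul, Int.natAbs_pow]
  simp

end

section
variable {m : ℕ}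

lemma exists_S_ne (hm : 1 ≤ m) (e : ℕ) (h : GF (2*m) → GF (2*m))
    (hKmh : ∀ t ∈ Km m, h t ∈ Km m) :
    ∃ ω ∈ Km m, (∑ x ∈ Km m, chi (2*m)
      (trKm m ((1:GF (2*m)) * (x ^ 2 ^ e * h x)) + trKm m (ω * x))) ≠ 0 := by
  by_contra hcon
  push_neg at hcon
  have htot : ∑ ω ∈ Km m, ∑ x ∈ Km m, chi (2*m)
      (trKm m ((1:GF (2*m)) * (x ^ 2 ^ e * h x)) + trKm m (ω * x)) = 0 :=
    Finset.sum_eq_zero hcon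
  rw [Finset.sum_comm] at htot
  have hev : ∀ x ∈ Km m, ∑ ω ∈ Km m, chi (2*m)
        (trKm m ((1:GF (2*m)) * (x ^ 2 ^ e * h x)) + trKm m (ω * x))
      = chi (2*m) (trKm m ((1:GF (2*m)) * (x ^ 2 ^ e * h x)))
          * (if x = 0 then (2:ℤ)^m else 0) := by
    intro x hx
    have hu : (1:GF (2*m)) * (x ^ 2 ^ e * h x) ∈ Km m :=
      mul_mem_Km one_mem_Km (mul_mem_Km (pow2_mem_Km hx e) (hKmh x hx))
    have hsplit : ∀ ω ∈ Km m, chi (2*m)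
          (trKm m ((1:GF (2*m)) * (x ^ 2 ^ e * h x)) + trKm m (ω * x))
        = chi (2*m) (trKm m ((1:GF (2*m)) * (x ^ 2 ^ e * h x)))
            * chi (2*m) (trKm m (ω * x)) := by
      intro ω hω
      exact chi_add (trKm_mem01 hu) (trKm_mem01 (mul_mem_Km hω hx))
    rw [Finset.sum_congr rfl hsplit, ← Finset.mul_sum, charSum hm hx]
  rw [Finset.sum_congr rfl hev] at htot
  have hstep : ∀ x ∈ Km m, chi (2*m) (trKm m ((1:GF (2*m)) * (x ^ 2 ^ e * h x)))
        * (if x = 0 then (2:ℤ)^m else 0)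
      = if x = 0 then chi (2*m) (trKm m ((1:GF (2*m)) * (x ^ 2 ^ e * h x))) * (2:ℤ)^m
        else 0 := by
    intro x _
    split <;> simp
  rw [Finset.sum_congr rfl hstep, Finset.sum_ite_eq' (Km m) 0, if_pos zero_mem_Km] at htot
  have h0 : (0:GF (2*m)) ^ 2 ^ e = 0 := zero_pow (by positivity)
  rw [h0, zero_mul, mul_zero, trKm_zero, chi_zero, one_mul] at htot
  have hne : (2:ℤ)^m ≠ 0 := by positivity
  exact hne htot

end

/-- For `F(x) = x^(2^e)·h(Tr_{2^n/2^m}(x))` with `h` a bijection of `K_m`,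
`max_{a≠0,ω} |W_{F_a}(ω)| = 2^m · max_{a∈K_m\{0}, ω∈K_m} |W_{H_a}(ω)|`; equivalently
`N_F = 2^(n-1) - 2^(m-1)·max_{a∈K_m\{0}, ω∈K_m} |W_{H_a}(ω)|`. -/
theorem stmt1 (m : ℕ) (hm : 1 ≤ m) (e : ℕ)
    (h : GF (2*m) → GF (2*m))
    (hbij : Set.BijOn h {x : GF (2*m) | x ^ 2 ^ m = x} {x : GF (2*m) | x ^ 2 ^ m = x}) :
    maxAbsW m (fun x => x ^ 2 ^ e * h (x + x ^ 2 ^ m))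
      = 2 ^ m *
        (((Km m).filter (fun a => a ≠ 0)) ×ˢ Km m).sup
          (fun p => (∑ x ∈ Km m,
            chi (2*m) (trKm m (p.1 * (x ^ 2 ^ e * h x)) + trKm m (p.2 * x))).natAbs) ∧
    nlin m (fun x => x ^ 2 ^ e * h (x + x ^ 2 ^ m))
      = 2 ^ (2*m - 1) - 2 ^ (m - 1) *
        ((((Km m).filter (fun a => a ≠ 0)) ×ˢ Km m).sup
          (fun p => (∑ x ∈ Km m,
            chi (2*m) (trKm m (p.1 * (x ^ 2 ^ e * h x)) + trKm m (p.2 * x))).natAbs) : ℕ) := by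
  obtain ⟨δ, hδ⟩ := exists_delta hm
  have hKmh : ∀ t ∈ Km m, h t ∈ Km m := fun t ht => mem_Km.mpr (hbij.mapsTo (mem_Km.mp ht))
  set Sf : GF (2*m) × GF (2*m) → ℕ := fun p => (∑ x ∈ Km m,
      chi (2*m) (trKm m (p.1 * (x ^ 2 ^ e * h x)) + trKm m (p.2 * x))).natAbs with hSf
  set M : ℕ := (((Km m).filter (fun a => a ≠ 0)) ×ˢ Km m).sup Sf with hMdef
  have hgrid_ne : (((Km m).filter (fun a => a ≠ 0)) ×ˢ Km m).Nonempty := by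
    refine ⟨((1 : GF (2*m)), 0), ?_⟩
    rw [Finset.mem_product, Finset.mem_filter]
    exact ⟨⟨one_mem_Km, one_ne_zero⟩, zero_mem_Km⟩
  have hM1 : 1 ≤ M := by
    obtain ⟨ω₀, hω₀, hne⟩ := exists_S_ne hm e h hKmh
    have hmem : ((1 : GF (2*m)), ω₀) ∈ ((Km m).filter (fun a => a ≠ 0)) ×ˢ Km m := by
      rw [Finset.mem_product, Finset.mem_filter]
      exact ⟨⟨one_mem_Km, one_ne_zero⟩, hω₀⟩
    calc 1 ≤ Sf ((1 : GF (2*m)), ω₀) :=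
          Nat.one_le_iff_ne_zero.mpr (Int.natAbs_ne_zero.mpr hne)
      _ ≤ M := Finset.le_sup hmem
  have key : maxAbsW m (fun x => x ^ 2 ^ e * h (x + x ^ 2 ^ m)) = 2 ^ m * M := by
    apply le_antisymm
    · apply Finset.sup_le
      rintro ⟨a, ω⟩ hp
      rw [Finset.mem_product, Finset.mem_filter] at hp
      have ha0 : a ≠ 0 := hp.1.2
      show (walsh (2*m) (fun x => atr (2*m)
        (a * (x ^ 2 ^ e * h (x + x ^ 2 ^ m)))) ω).natAbs ≤ 2 ^ m * M
      by_cases haK : a ∈ Km m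
      · by_cases hωK : ω ∈ Km m
        · rw [walsh_caseA hm e h hKmh hδ haK hωK, Int.natAbs_mul, Int.natAbs_pow]
          have hmem : (a, ω) ∈ ((Km m).filter (fun a => a ≠ 0)) ×ˢ Km m := by
            rw [Finset.mem_product, Finset.mem_filter]
            exact ⟨⟨haK, ha0⟩, hωK⟩
          have hle : Sf (a, ω) ≤ M := Finset.le_sup hmem
          calc ((2:ℤ).natAbs) ^ m * (∑ x ∈ Km m, chi (2*m)
                (trKm m (a * (x ^ 2 ^ e * h x)) + trKm m (ω * x))).natAbs
              = 2 ^ m * Sf (a, ω) := rfl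
            _ ≤ 2 ^ m * M := Nat.mul_le_mul_left _ hle
        · rw [walsh_caseA' hm e h hKmh hδ haK hωK]
          simp
      · rw [walsh_caseB hm e h hKmh hbij hδ ω haK]
        exact Nat.le_mul_of_pos_right _ hM1
    · obtain ⟨p₀, hp₀, hMp⟩ := Finset.exists_mem_eq_sup _ hgrid_ne Sf
      rw [Finset.mem_product, Finset.mem_filter] at hp₀
      have hwal := walsh_caseA hm e h hKmh hδ hp₀.1.1 hp₀.2
      have hmem : p₀ ∈ ((Finset.univ.filter (fun a : GF (2*m) => a ≠ 0))
          ×ˢ (Finset.univ : Finset (GF (2*m)))) := by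
        rw [Finset.mem_product, Finset.mem_filter]
        exact ⟨⟨Finset.mem_univ _, hp₀.1.2⟩, Finset.mem_univ _⟩
      have hval : (walsh (2*m) (fun x => atr (2*m)
          (p₀.1 * (x ^ 2 ^ e * h (x + x ^ 2 ^ m)))) p₀.2).natAbs = 2 ^ m * M := by
        rw [hwal, Int.natAbs_mul, Int.natAbs_pow]
        have : Sf p₀ = (∑ x ∈ Km m, chi (2*m)
          (trKm m (p₀.1 * (x ^ 2 ^ e * h x)) + trKm m (p₀.2 * x))).natAbs := rfl
        rw [← hMdef] at hMp
        calc ((2:ℤ).natAbs) ^ m * (∑ x ∈ Km m, chi (2*m)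
              (trKm m (p₀.1 * (x ^ 2 ^ e * h x)) + trKm m (p₀.2 * x))).natAbs
            = 2 ^ m * Sf p₀ := rfl
          _ = 2 ^ m * M := by rw [← hMp]
      rw [← hval]
      exact Finset.le_sup (f := fun p : GF (2*m) × GF (2*m) => (walsh (2*m)
        (fun x => atr (2*m) (p.1 * (x ^ 2 ^ e * h (x + x ^ 2 ^ m)))) p.2).natAbs) hmem
  refine ⟨key, ?_⟩
  rw [nlin, key]
  have h2 : ((2:ℚ) ^ m * (M:ℚ)) / 2 = 2 ^ (m-1) * M := by
    have hpow : (2:ℚ) ^ m = 2 * 2 ^ (m-1) := by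
      rw [← pow_succ']
      congr 1
      omega
    rw [hpow]
    ring
  push_cast
  rw [h2]
end
end

section
/- Let β ∈ F_{2^n} with β ∉ K_m, set γ = β + β^{2^m} (so γ ∈ K_m, γ ≠ 0), let 3 ≤ k ≤ m and u_1, u_2, …, u_k ∈ K_m with Tr_{2^m/2}(u_1·u_i) = 0 for all 2 ≤ i ≤ k. Define g : F_{2^n} → F_2 by g(x) = Tr_{2^m/2}(γ^{−1}·x^{2^m+1}) + 1. Then for all x ∈ F_{2^n}: (i) D_{βu_1}g(x) = Tr_{2^n/2}(γ^{−1}u_1β^{2^m}x) + Tr_{2^m/2}(γ^{−1}β^{2^m+1}u_1²); (ii) D_{u_i}g(x) = Tr_{2^n/2}(γ^{−1}u_i x) + Tr_{2^m/2}(γ^{−1}u_i²) for 2 ≤ i ≤ k; and (iii) for every (w_1, …, w_k) ∈ F_2^k, g(x + w_1·βu_1 + Σ_{i=2}^{k} w_i·u_i) = g(x) + w_1·D_{βu_1}g(x) + Σ_{i=2}^{k} w_i·D_{u_i}g(x). -/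
open scoped Classical BigOperators

noncomputable section

/-- The dual `G*_β(x) = Tr_{2^m/2}(γ⁻¹·x^(2^m+1)) + 1` of the Niho quadratic component,
with `γ = β + β^(2^m)`. -/
def nihoDual (m : ℕ) (γ : GF (2*m)) (x : GF (2*m)) : GF (2*m) :=
  trKm m (γ⁻¹ * x ^ (2 ^ m + 1)) + 1

namespace S6

variable {m : ℕ}

lemma addself (a : GF (2*m)) : a + a = 0 := CharTwo.add_self_eq_zero a

lemma frob_add (a b : GF (2*m)) (j : ℕ) : (a + b) ^ 2 ^ j = a ^ 2 ^ j + b ^ 2 ^ j :=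
  add_pow_char_pow ..

lemma trKm_add (a b : GF (2*m)) : trKm m (a + b) = trKm m a + trKm m b := by
  unfold trKm
  rw [← Finset.sum_add_distrib]
  exact Finset.sum_congr rfl fun j _ => frob_add a b j

lemma trKm_zero : trKm m (0 : GF (2*m)) = 0 := by
  unfold trKm
  exact Finset.sum_eq_zero fun j _ => zero_pow (by positivity)

lemma atr_split (y : GF (2*m)) : atr (2*m) y = trKm m y + trKm m (y ^ 2 ^ m) := by
  unfold atr trKm
  have hr : Finset.range (2*m) = Finset.range (m+m) := by rw [two_mul]
  rw [hr, Finset.sum_range_add]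
  congr 1
  exact Finset.sum_congr rfl fun j _ => by rw [pow_add, pow_mul]

lemma tr_split' (y : GF (2*m)) : trKm m (y + y ^ 2 ^ m) = atr (2*m) y := by
  rw [trKm_add, atr_split]

lemma pow_card' (hm : m ≠ 0) (x : GF (2*m)) : x ^ 2 ^ (2*m) = x := by
  have h : Fintype.card (GF (2*m)) = 2 ^ (2*m) := by
    rw [← Nat.card_eq_fintype_card, GaloisField.card 2 (2*m) (by omega)]
  rw [← h]; exact FiniteField.pow_card x

lemma sigma_sigma (hm : m ≠ 0) (x : GF (2*m)) : (x ^ 2 ^ m) ^ 2 ^ m = x := by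
  rw [← pow_mul, ← pow_add, ← two_mul, pow_card' hm]


lemma master (γ x v : GF (2*m)) :
    nihoDual m γ (x + v) + nihoDual m γ x
      = trKm m (γ⁻¹ * (x ^ 2 ^ m * v + v ^ 2 ^ m * x + v ^ 2 ^ m * v)) := by
  unfold nihoDual
  have h : γ⁻¹ * (x + v) ^ (2 ^ m + 1)
      = γ⁻¹ * x ^ (2 ^ m + 1)
        + γ⁻¹ * (x ^ 2 ^ m * v + v ^ 2 ^ m * x + v ^ 2 ^ m * v) := by
    rw [pow_succ (x+v), frob_add, pow_succ x]
    ring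
  rw [h, trKm_add]
  linear_combination addself (trKm m (γ⁻¹ * x ^ (2 ^ m + 1))) + addself (1 : GF (2*m))

def bf (m : ℕ) (γ a b : GF (2*m)) : GF (2*m) :=
  trKm m (γ⁻¹ * (a ^ 2 ^ m * b + b ^ 2 ^ m * a))

lemma three (γ x a b : GF (2*m)) :
    nihoDual m γ (x + (a + b))
      = nihoDual m γ (x + a) + nihoDual m γ (x + b) + nihoDual m γ x + bf m γ a b := by
  have ha := master γ x a
  have hb := master γ x b
  have hab := master γ x (a + b)
  have hexp : γ⁻¹ * (x ^ 2 ^ m * (a + b) + (a + b) ^ 2 ^ m * x + (a + b) ^ 2 ^ m * (a + b))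
      = γ⁻¹ * (x ^ 2 ^ m * a + a ^ 2 ^ m * x + a ^ 2 ^ m * a)
        + γ⁻¹ * (x ^ 2 ^ m * b + b ^ 2 ^ m * x + b ^ 2 ^ m * b)
        + γ⁻¹ * (a ^ 2 ^ m * b + b ^ 2 ^ m * a) := by
    rw [frob_add]; ring
  rw [hexp, trKm_add, trKm_add] at hab
  unfold bf
  linear_combination hab - ha - hb

lemma bf_comm (γ a b : GF (2*m)) : bf m γ a b = bf m γ b a := by
  unfold bf
  rw [add_comm (a ^ 2 ^ m * b)]

lemma bf_add_right (γ a b c : GF (2*m)) :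
    bf m γ a (b + c) = bf m γ a b + bf m γ a c := by
  unfold bf
  have h : γ⁻¹ * (a ^ 2 ^ m * (b + c) + (b + c) ^ 2 ^ m * a)
      = γ⁻¹ * (a ^ 2 ^ m * b + b ^ 2 ^ m * a) + γ⁻¹ * (a ^ 2 ^ m * c + c ^ 2 ^ m * a) := by
    rw [frob_add]; ring
  rw [h, trKm_add]

lemma bf_zero_right (γ a : GF (2*m)) : bf m γ a (0 : GF (2*m)) = 0 := by
  unfold bf
  rw [zero_pow (by positivity), mul_zero, zero_mul, add_zero, mul_zero, trKm_zero]

lemma bf_zero_left (γ b : GF (2*m)) : bf m γ (0 : GF (2*m)) b = 0 := by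
  unfold bf
  rw [zero_pow (by positivity), zero_mul, mul_zero, zero_add, mul_zero, trKm_zero]

lemma bf_sum (γ a : GF (2*m)) (S : Finset ℕ) (f : ℕ → GF (2*m)) :
    bf m γ a (∑ i ∈ S, f i) = ∑ i ∈ S, bf m γ a (f i) := by
  induction S using Finset.cons_induction with
  | empty => simpa using bf_zero_right γ a
  | cons i S hi ih => rw [Finset.sum_cons, Finset.sum_cons, bf_add_right, ih]

lemma main (γ : GF (2*m)) (v w : ℕ → GF (2*m)) (hw : ∀ i, w i = 0 ∨ w i = 1) :
    ∀ S : Finset ℕ, (∀ i ∈ S, ∀ j ∈ S, i ≠ j → bf m γ (v i) (v j) = 0) →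
    ∀ x : GF (2*m),
      nihoDual m γ (x + ∑ i ∈ S, w i * v i)
        = nihoDual m γ x
          + ∑ i ∈ S, w i * (nihoDual m γ (x + v i) + nihoDual m γ x) := by
  intro S
  induction S using Finset.cons_induction with
  | empty => intro _ x; simp
  | cons a S ha ih =>
    intro hB x
    have hBS : ∀ i ∈ S, ∀ j ∈ S, i ≠ j → bf m γ (v i) (v j) = 0 := fun i hi j hj hij =>
      hB i (Finset.mem_cons_of_mem hi) j (Finset.mem_cons_of_mem hj) hij
    rw [Finset.sum_cons, Finset.sum_cons, three γ x (w a * v a) (∑ i ∈ S, w i * v i)]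
    have hbf : bf m γ (w a * v a) (∑ i ∈ S, w i * v i) = 0 := by
      rcases hw a with h0 | h1
      · rw [h0, zero_mul, bf_zero_left]
      · rw [h1, one_mul, bf_sum]
        refine Finset.sum_eq_zero fun i hi => ?_
        rcases hw i with h0' | h1'
        · rw [h0', zero_mul, bf_zero_right]
        · rw [h1', one_mul]
          exact hB a (Finset.mem_cons_self a S) i (Finset.mem_cons_of_mem hi)
            (fun h => ha (h ▸ hi))
    have hterm : nihoDual m γ (x + w a * v a)
        = nihoDual m γ x + w a * (nihoDual m γ (x + v a) + nihoDual m γ x) := by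
      rcases hw a with h0 | h1
      · rw [h0]; simp
      · rw [h1, one_mul, one_mul]
        linear_combination -addself (nihoDual m γ x)
    rw [hbf, ih hBS x, hterm]
    linear_combination addself (nihoDual m γ x)

end S6

/-- derivative formulas for the dual of the Niho quadratic bent function,
and Condition A for `(g; βu₁, u₂, …, u_k)`. -/
theorem stmt6 (m k : ℕ) (hm : 1 ≤ m) (hk3 : 3 ≤ k) (hkm : k ≤ m)
    (β : GF (2*m)) (hβ : β ^ 2 ^ m ≠ β)
    (γ : GF (2*m)) (hγ : γ = β + β ^ 2 ^ m)
    (u : ℕ → GF (2*m))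
    (huK : ∀ i, 1 ≤ i → i ≤ k → (u i) ^ 2 ^ m = u i)
    (hortho : ∀ i, 2 ≤ i → i ≤ k → trKm m (u 1 * u i) = 0) :
    (γ ^ 2 ^ m = γ ∧ γ ≠ 0) ∧
    (∀ x : GF (2*m),
      nihoDual m γ (x + β * u 1) + nihoDual m γ x
        = atr (2*m) (γ⁻¹ * u 1 * β ^ 2 ^ m * x)
          + trKm m (γ⁻¹ * β ^ (2 ^ m + 1) * (u 1) ^ 2)) ∧
    (∀ i, 2 ≤ i → i ≤ k → ∀ x : GF (2*m),
      nihoDual m γ (x + u i) + nihoDual m γ x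
        = atr (2*m) (γ⁻¹ * u i * x) + trKm m (γ⁻¹ * (u i) ^ 2)) ∧
    (∀ w : ℕ → GF (2*m), (∀ i, w i = 0 ∨ w i = 1) → ∀ x : GF (2*m),
      nihoDual m γ (x + w 1 * (β * u 1) + ∑ i ∈ Finset.Icc 2 k, w i * u i)
        = nihoDual m γ x
          + w 1 * (nihoDual m γ (x + β * u 1) + nihoDual m γ x)
          + ∑ i ∈ Finset.Icc 2 k, w i * (nihoDual m γ (x + u i) + nihoDual m γ x)) := by

  have hm0 : m ≠ 0 := by omega
  have hσσ : ∀ y : GF (2*m), (y ^ 2 ^ m) ^ 2 ^ m = y := S6.sigma_sigma hm0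
  have hγσ : γ ^ 2 ^ m = γ := by
    rw [hγ, S6.frob_add, hσσ, add_comm]
  have hγ0 : γ ≠ 0 := by
    intro h
    have h0 : β + β ^ 2 ^ m = 0 := hγ ▸ h
    exact hβ (by linear_combination h0 - S6.addself β)
  have hγinv : (γ⁻¹) ^ 2 ^ m = γ⁻¹ := by rw [inv_pow, hγσ]
  have hu1 : (u 1) ^ 2 ^ m = u 1 := huK 1 le_rfl (by omega)
  have hbu : (β * u 1) ^ 2 ^ m = β ^ 2 ^ m * u 1 := by rw [mul_pow, hu1]
  refine ⟨⟨hγσ, hγ0⟩, ?_, ?_, ?_⟩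
  · intro x
    rw [S6.master]
    have hz : (γ⁻¹ * u 1 * β ^ 2 ^ m * x) ^ 2 ^ m
        = γ⁻¹ * u 1 * β * x ^ 2 ^ m := by
      rw [mul_pow, mul_pow, mul_pow, hγinv, hu1, hσσ]
    have key : γ⁻¹ * (x ^ 2 ^ m * (β * u 1) + (β * u 1) ^ 2 ^ m * x
          + (β * u 1) ^ 2 ^ m * (β * u 1))
        = (γ⁻¹ * u 1 * β ^ 2 ^ m * x + (γ⁻¹ * u 1 * β ^ 2 ^ m * x) ^ 2 ^ m)
          + γ⁻¹ * β ^ (2 ^ m + 1) * (u 1) ^ 2 := by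
      rw [hz, hbu, pow_succ β]
      ring
    rw [key, S6.trKm_add, S6.tr_split']
  · intro i hi2 hik x
    have hui : (u i) ^ 2 ^ m = u i := huK i (by omega) hik
    rw [S6.master]
    have hz : (γ⁻¹ * u i * x) ^ 2 ^ m = γ⁻¹ * u i * x ^ 2 ^ m := by
      rw [mul_pow, mul_pow, hγinv, hui]
    have key : γ⁻¹ * (x ^ 2 ^ m * u i + (u i) ^ 2 ^ m * x + (u i) ^ 2 ^ m * u i)
        = (γ⁻¹ * u i * x + (γ⁻¹ * u i * x) ^ 2 ^ m) + γ⁻¹ * (u i) ^ 2 := by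
      rw [hz, hui]; ring
    rw [key, S6.trKm_add, S6.tr_split']
  · intro w hw x
    set v : ℕ → GF (2*m) := fun i => if i = 1 then β * u 1 else u i with hv
    have hv1 : v 1 = β * u 1 := if_pos rfl
    have hvi : ∀ i, 2 ≤ i → v i = u i := fun i hi => if_neg (by omega)
    have hcross : ∀ j, 2 ≤ j → j ≤ k → S6.bf m γ (β * u 1) (u j) = 0 := by
      intro j hj2 hjk
      have huj : (u j) ^ 2 ^ m = u j := huK j (by omega) hjk
      have e : γ⁻¹ * ((β * u 1) ^ 2 ^ m * u j + (u j) ^ 2 ^ m * (β * u 1))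
          = γ⁻¹ * γ * (u 1 * u j) := by
        rw [hbu, huj, hγ]; ring
      rw [inv_mul_cancel₀ hγ0, one_mul] at e
      unfold S6.bf
      rw [e]
      exact hortho j hj2 hjk
    have hB : ∀ i ∈ Finset.Icc 1 k, ∀ j ∈ Finset.Icc 1 k, i ≠ j →
        S6.bf m γ (v i) (v j) = 0 := by
      intro i hi j hj hij
      rw [Finset.mem_Icc] at hi hj
      by_cases h1 : i = 1
      · have hj2 : 2 ≤ j := by omega
        rw [h1, hv1, hvi j hj2]
        exact hcross j hj2 hj.2
      · by_cases h2 : j = 1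
        · have hi2 : 2 ≤ i := by omega
          rw [h2, hv1, hvi i hi2, S6.bf_comm]
          exact hcross i hi2 hi.2
        · have hi2 : 2 ≤ i := by omega
          have hj2 : 2 ≤ j := by omega
          rw [hvi i hi2, hvi j hj2]
          have hui : (u i) ^ 2 ^ m = u i := huK i (by omega) hi.2
          have huj : (u j) ^ 2 ^ m = u j := huK j (by omega) hj.2
          have e : γ⁻¹ * ((u i) ^ 2 ^ m * u j + (u j) ^ 2 ^ m * u i) = 0 := by
            rw [hui, huj]
            linear_combination γ⁻¹ * S6.addself (u i * u j)
          unfold S6.bf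
          rw [e, S6.trKm_zero]
    have hmain := S6.main γ v w hw (Finset.Icc 1 k) hB x
    have h1n : (1 : ℕ) ∉ Finset.Icc 2 k := by simp
    have hIcc : Finset.Icc 1 k = Finset.cons 1 (Finset.Icc 2 k) h1n := by
      ext j
      simp only [Finset.mem_Icc, Finset.mem_cons]
      omega
    have hs1 : ∑ i ∈ Finset.Icc 2 k, w i * v i = ∑ i ∈ Finset.Icc 2 k, w i * u i :=
      Finset.sum_congr rfl fun i hi => by rw [hvi i (Finset.mem_Icc.mp hi).1]
    have hs2 : ∑ i ∈ Finset.Icc 2 k, w i * (nihoDual m γ (x + v i) + nihoDual m γ x)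
        = ∑ i ∈ Finset.Icc 2 k, w i * (nihoDual m γ (x + u i) + nihoDual m γ x) :=
      Finset.sum_congr rfl fun i hi => by rw [hvi i (Finset.mem_Icc.mp hi).1]
    rw [hIcc, Finset.sum_cons, Finset.sum_cons, hv1, hs1, hs2] at hmain
    rw [add_assoc x, add_assoc (nihoDual m γ x)]
    exact hmain
end
end

section
/- Let u_1, u_2 ∈ F_{2^n} with u_1 ∉ K_m, u_2 ∉ K_m, u_1·u_2^{2^m} ∈ K_m, and Tr_{2^m/2}(u_1·u_2^{2^m}) = 0. Define F : F_{2^n} → F_{2^n} by F(x) = x^{2^m+1} + u_1·x·Tr_{2^n/2}(u_2x), and for a ∈ F_{2^n}, a ≠ 0, and b ∈ F_{2^n}, let δ_F(a,b) = #{x ∈ F_{2^n} : F(x+a) + F(x) = b}. Then: if Tr_{2^n/2}(u_2a) = 1, δ_F(a,b) ∈ {0, 2}; and if Tr_{2^n/2}(u_2a) = 0, δ_F(a,b) ∈ {0, 2^{m−1}, 2^m}. -/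
open scoped Classical BigOperators

noncomputable section

namespace St10

variable {m : ℕ}

lemma h2 : (2 : GF (2*m)) = 0 := CharTwo.two_eq_zero

lemma ceq {A B : GF (2*m)} (h : A + B = 0) : A = B := by
  linear_combination h - B * (h2 (m := m))

lemma ceq' {A B : GF (2*m)} (h : A = B) : A + B = 0 := by
  linear_combination h + B * (h2 (m := m))

lemma pow_card (hm : 1 ≤ m) (x : GF (2*m)) : x ^ (2^(2*m)) = x := by
  rw [← (by rw [← Nat.card_eq_fintype_card]; exact GaloisField.card 2 (2*m) (by omega) :
    Fintype.card (GF (2*m)) = 2^(2*m))]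
  exact FiniteField.pow_card x

lemma frq_add (x y : GF (2*m)) : (x+y)^(2^m) = x^(2^m)+y^(2^m) :=
  add_pow_char_pow (p := 2) x y m

lemma frq_frq (hm : 1 ≤ m) (x : GF (2*m)) : (x^(2^m))^(2^m) = x := by
  rw [← pow_mul, ← pow_add, ← two_mul]; exact pow_card hm x

lemma atr_add (x y : GF (2*m)) : atr (2*m) (x+y) = atr (2*m) x + atr (2*m) y := by
  unfold atr; rw [← Finset.sum_add_distrib]
  exact Finset.sum_congr rfl fun j _ => add_pow_char_pow (p := 2) x y j

lemma trKm_add (x y : GF (2*m)) : trKm m (x+y) = trKm m x + trKm m y := by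
  unfold trKm; rw [← Finset.sum_add_distrib]
  exact Finset.sum_congr rfl fun j _ => add_pow_char_pow (p := 2) x y j

lemma atr_split (z : GF (2*m)) : atr (2*m) z = trKm m z + trKm m (z^(2^m)) := by
  unfold atr trKm
  have h2 : Finset.range (2*m) = Finset.range (m+m) := by rw [two_mul]
  rw [h2, Finset.sum_range_add]
  congr 1
  exact Finset.sum_congr rfl fun j _ => by rw [← pow_mul, ← pow_add]

lemma atr_eq (z : GF (2*m)) : atr (2*m) z = trKm m (z + z^(2^m)) := by
  rw [atr_split, trKm_add]

lemma shift_sum (n : ℕ) (f : ℕ → GF (2*m)) :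
    ∑ j ∈ Finset.range n, f (j+1) = ∑ j ∈ Finset.range n, f j + f n - f 0 := by
  have h := Finset.sum_range_succ' f n
  have h2 := Finset.sum_range_succ f n
  rw [h2] at h
  linear_combination -h

lemma zero_or_one {t : GF (2*m)} (h : t^2 = t) : t = 0 ∨ t = 1 := by
  have : t * (t - 1) = 0 := by linear_combination h
  rcases mul_eq_zero.1 this with h1 | h1
  · exact Or.inl h1
  · exact Or.inr (by linear_combination h1)

lemma atr01 (hm : 1 ≤ m) (z : GF (2*m)) : atr (2*m) z = 0 ∨ atr (2*m) z = 1 := by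
  refine zero_or_one ?_
  unfold atr
  rw [sum_pow_char (p := 2)]
  have : ∀ j ∈ Finset.range (2*m), (z ^ 2^j)^2 = z ^ 2^(j+1) := by
    intro j _; rw [← pow_mul, ← pow_succ]
  rw [Finset.sum_congr rfl this, shift_sum (2*m) (fun j => z ^ 2^j)]
  simp [pow_card hm z]

lemma trKm01 (z : GF (2*m)) (hz : z ^ 2^m = z) : trKm m z = 0 ∨ trKm m z = 1 := by
  refine zero_or_one ?_
  unfold trKm
  rw [sum_pow_char (p := 2)]
  have : ∀ j ∈ Finset.range m, (z ^ 2^j)^2 = z ^ 2^(j+1) := by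
    intro j _; rw [← pow_mul, ← pow_succ]
  rw [Finset.sum_congr rfl this, shift_sum m (fun j => z ^ 2^j)]
  simp [hz]

/-- The main algebraic rewrite of the differential. -/
lemma key_eqn (u₁ u₂ : GF (2*m)) (F : GF (2*m) → GF (2*m))
    (hF : ∀ x, F x = x ^ (2 ^ m + 1) + u₁ * x * atr (2*m) (u₂ * x))
    (a x : GF (2*m)) :
    F (x + a) + F x =
      a * x^(2^m) + a^(2^m) * x + u₁ * atr (2*m) (u₂*a) * x + u₁ * a * atr (2*m) (u₂*x)
        + (a^(2^m) * a + u₁ * a * atr (2*m) (u₂*a)) := by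
  rw [hF, hF]
  have e1 : (x+a) ^ (2^m+1) = (x^(2^m) + a^(2^m)) * (x + a) := by
    rw [pow_succ, frq_add]
  have e2 : x ^ (2^m+1) = x^(2^m) * x := pow_succ x (2^m)
  have e3 : atr (2*m) (u₂ * (x+a)) = atr (2*m) (u₂*x) + atr (2*m) (u₂*a) := by
    rw [mul_add, atr_add]
  rw [e1, e2, e3]
  linear_combination (x^(2^m)*x + u₁*x*(atr (2*m) (u₂*x))) * (h2 (m := m))

/-- Triviality of the kernel of `x ↦ a x^q + (a^q+u₁) x` when `Tr(u₂ a) = 1`. -/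
lemma ker_trivial (hm : 1 ≤ m)
    (u₁ u₂ : GF (2*m)) (hu₁ : u₁ ^ 2 ^ m ≠ u₁)
    (hK : (u₁ * u₂ ^ 2 ^ m) ^ 2 ^ m = u₁ * u₂ ^ 2 ^ m)
    (htr : trKm m (u₁ * u₂ ^ 2 ^ m) = 0)
    (a : GF (2*m)) (hε : atr (2*m) (u₂ * a) = 1)
    (x : GF (2*m)) (hx : a * x^(2^m) + (a^(2^m) + u₁) * x = 0) : x = 0 := by
  by_contra hx0
  have e1 : a * x^(2^m) = (a^(2^m) + u₁) * x := ceq hx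
  have e2 : a^(2^m) * x = (a + u₁^(2^m)) * x^(2^m) := by
    have := congrArg (· ^ (2^m)) hx
    rw [frq_add, mul_pow, mul_pow, frq_add, frq_frq hm, frq_frq hm] at this
    simp only [zero_pow (by positivity : (2:ℕ)^m ≠ 0)] at this
    exact ceq this
  have h5 : a*x^(2^m) * (a^(2^m)*x) = ((a^(2^m)+u₁)*x) * ((a+u₁^(2^m))*x^(2^m)) := by
    rw [e1, e2]
  have star' : (u₁*a + u₁^(2^m)*a^(2^m) + u₁^(2^m)*u₁) * (x^(2^m)*x) = 0 := by
    linear_combination (-1 : GF (2*m)) * h5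
  have hxq : x^(2^m)*x ≠ 0 := mul_ne_zero (pow_ne_zero _ hx0) hx0
  have star : u₁*a + u₁^(2^m)*a^(2^m) + u₁^(2^m)*u₁ = 0 :=
    (mul_eq_zero.1 star').resolve_right hxq
  have hu₁0 : u₁ ≠ 0 := by
    intro h; apply hu₁; rw [h, zero_pow (by positivity : (2:ℕ)^m ≠ 0)]
  have hk2 : u₁^(2^m) * u₂ = u₁ * u₂^(2^m) := by
    calc u₁^(2^m) * u₂ = (u₁ * u₂^(2^m))^(2^m) := by rw [mul_pow, frq_frq hm]
    _ = u₁ * u₂^(2^m) := hK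
  have keymul : (u₂*a + u₂^(2^m)*a^(2^m) - u₁*u₂^(2^m)) * (u₁^(2^m)*u₁) = 0 := by
    linear_combination (a*u₁)*hk2 + (u₁*u₂^(2^m))*star - (u₁*u₂^(2^m)*u₁^(2^m)*u₁)*(h2 (m := m))
  have key : u₂*a + u₂^(2^m)*a^(2^m) = u₁*u₂^(2^m) := by
    have := (mul_eq_zero.1 keymul).resolve_right
      (mul_ne_zero (pow_ne_zero _ hu₁0) hu₁0)
    linear_combination this
  have : atr (2*m) (u₂*a) = 0 := by
    rw [atr_eq]
    have h6 : u₂*a + (u₂*a)^(2^m) = u₁*u₂^(2^m) := by rw [mul_pow]; linear_combination key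
    rw [h6]; exact htr
  rw [this] at hε
  exact one_ne_zero hε.symm


end St10


namespace St10
variable {m : ℕ}

lemma case_one (hm : 1 ≤ m)
    (u₁ u₂ : GF (2*m)) (hu₁ : u₁ ^ 2 ^ m ≠ u₁)
    (hK : (u₁ * u₂ ^ 2 ^ m) ^ 2 ^ m = u₁ * u₂ ^ 2 ^ m)
    (htr : trKm m (u₁ * u₂ ^ 2 ^ m) = 0)
    (F : GF (2*m) → GF (2*m))
    (hF : ∀ x, F x = x ^ (2 ^ m + 1) + u₁ * x * atr (2*m) (u₂ * x))
    (a b : GF (2*m)) (ha : a ≠ 0) (hε : atr (2*m) (u₂ * a) = 1) :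
    (Finset.univ.filter (fun x : GF (2*m) => F (x + a) + F x = b)).card = 0 ∨
    (Finset.univ.filter (fun x : GF (2*m) => F (x + a) + F x = b)).card = 2 := by
  set S := Finset.univ.filter (fun x : GF (2*m) => F (x + a) + F x = b) with hS
  have hmem : ∀ x, x ∈ S ↔ F (x + a) + F x = b := by
    intro x; simp [hS]
  have same_tau : ∀ x ∈ S, ∀ y ∈ S, atr (2*m) (u₂*x) = atr (2*m) (u₂*y) → x = y := by
    intro x hx y hy hτ
    have hx1 := (hmem x).1 hx
    have hy1 := (hmem y).1 hy
    rw [key_eqn u₁ u₂ F hF a x, hε] at hx1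
    rw [key_eqn u₁ u₂ F hF a y, hε] at hy1
    rw [hτ] at hx1
    have hker : a * (x+y)^(2^m) + (a^(2^m) + u₁) * (x+y) = 0 := by
      rw [frq_add]
      linear_combination hx1 - hy1 + (a*y^(2^m) + a^(2^m)*y + u₁*y) * (h2 (m := m))
    have := ker_trivial hm u₁ u₂ hu₁ hK htr a hε (x+y) hker
    exact ceq this
  have hle : S.card ≤ 2 := by
    by_contra hgt
    push_neg at hgt
    obtain ⟨x, hx, y, hy, z, hz, hxy, hxz, hyz⟩ := Finset.two_lt_card.1 hgt
    have htri : atr (2*m) (u₂*x) = atr (2*m) (u₂*y) ∨ atr (2*m) (u₂*x) = atr (2*m) (u₂*z)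
        ∨ atr (2*m) (u₂*y) = atr (2*m) (u₂*z) := by
      rcases atr01 hm (u₂*x) with h1|h1 <;> rcases atr01 hm (u₂*y) with hh|hh <;>
        rcases atr01 hm (u₂*z) with h3|h3 <;> simp [h1, hh, h3]
    rcases htri with h|h|h
    · exact hxy (same_tau x hx y hy h)
    · exact hxz (same_tau x hx z hz h)
    · exact hyz (same_tau y hy z hz h)
  have hne1 : S.card ≠ 1 := by
    intro h1
    obtain ⟨x, hx⟩ := Finset.card_eq_one.1 h1
    have hxS : x ∈ S := by rw [hx]; exact Finset.mem_singleton_self x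
    have hxa : x + a ∈ S := by
      rw [hmem]
      have : x + a + a = x := by
        rw [add_assoc, CharTwo.add_self_eq_zero, add_zero]
      rw [this, add_comm (F x) (F (x+a))]
      exact (hmem x).1 hxS
    rw [hx, Finset.mem_singleton] at hxa
    exact ha (by linear_combination hxa)
  omega

end St10


namespace St10
variable {m : ℕ}

lemma card_le_natDegree (p : Polynomial (GF (2*m))) (hp : p ≠ 0)
    (s : Finset (GF (2*m))) (h : ∀ z ∈ s, p.eval z = 0) : s.card ≤ p.natDegree := by
  have hsub : s ⊆ p.roots.toFinset := by
    intro z hz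
    exact Multiset.mem_toFinset.2 ((Polynomial.mem_roots hp).2 (h z hz))
  calc s.card ≤ p.roots.toFinset.card := Finset.card_le_card hsub
    _ ≤ Multiset.card p.roots := p.roots.toFinset_card_le
    _ ≤ p.natDegree := p.card_roots'

lemma card_KK_le (hm : 1 ≤ m) :
    (Finset.univ.filter (fun z : GF (2*m) => z^(2^m) = z)).card ≤ 2^m := by
  have h1 : (2:ℕ)^m ≠ 1 := by have := Nat.one_lt_two_pow_iff.2 (by omega : m ≠ 0); omega
  have hp : (Polynomial.X^(2^m) - Polynomial.X : Polynomial (GF (2*m))) ≠ 0 := by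
    intro h
    have := congrArg (Polynomial.coeff · (2^m)) h
    simp only [Polynomial.coeff_zero] at this
    rw [Polynomial.coeff_sub, Polynomial.coeff_X_pow] at this
    rw [if_pos rfl, Polynomial.coeff_X, if_neg (by omega)] at this
    simp at this
  have := card_le_natDegree (Polynomial.X^(2^m) - Polynomial.X) hp
    (Finset.univ.filter (fun z : GF (2*m) => z^(2^m) = z))
    (by intro z hz
        simp only [Finset.mem_filter] at hz
        simp [hz.2, sub_eq_zero])
  refine this.trans ?_
  refine (Polynomial.natDegree_sub_le _ _).trans ?_
  rw [Polynomial.natDegree_X_pow, Polynomial.natDegree_X]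
  exact max_le le_rfl Nat.one_le_two_pow

lemma trKm_zero : trKm m 0 = 0 := by
  unfold trKm
  exact Finset.sum_eq_zero fun j _ => zero_pow (by positivity)

/-- roots bound for the subfield-trace polynomial -/
lemma card_tr_le (hm : 1 ≤ m) (c : GF (2*m))
    (s : Finset (GF (2*m))) (h : ∀ z ∈ s, trKm m z = c) : s.card ≤ 2^(m-1) := by
  set p : Polynomial (GF (2*m)) :=
    (∑ j ∈ Finset.range m, Polynomial.X^(2^j)) + Polynomial.C c with hpdef
  have hcoeff : p.coeff (2^(m-1)) = 1 := by
    rw [hpdef]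
    rw [Polynomial.coeff_add, Polynomial.finset_sum_coeff]
    have h1 : ∑ j ∈ Finset.range m, (Polynomial.X^(2^j) : Polynomial (GF (2*m))).coeff (2^(m-1))
        = 1 := by
      rw [Finset.sum_eq_single_of_mem (m-1) (Finset.mem_range.2 (by omega))]
      · simp [Polynomial.coeff_X_pow]
      · intro j hj hne
        simp only [Polynomial.coeff_X_pow]
        rw [if_neg]
        intro hq
        exact hne (Nat.pow_right_injective (le_refl 2) hq).symm
    rw [h1, Polynomial.coeff_C, if_neg (by positivity)]
    ring
  have hp : p ≠ 0 := by
    intro h0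
    rw [h0, Polynomial.coeff_zero] at hcoeff
    exact one_ne_zero hcoeff.symm
  have heval : ∀ z ∈ s, p.eval z = 0 := by
    intro z hz
    rw [hpdef]
    simp only [Polynomial.eval_add, Polynomial.eval_finset_sum, Polynomial.eval_pow,
      Polynomial.eval_X, Polynomial.eval_C]
    have : ∑ j ∈ Finset.range m, z^(2^j) = trKm m z := rfl
    rw [this, h z hz, CharTwo.add_self_eq_zero]
  have hdeg : p.natDegree ≤ 2^(m-1) := by
    rw [hpdef]
    refine (Polynomial.natDegree_add_le _ _).trans ?_
    simp only [Polynomial.natDegree_C, max_le_iff]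
    constructor
    · refine Polynomial.natDegree_sum_le_of_forall_le _ _ ?_
      intro j hj
      rw [Polynomial.natDegree_X_pow]
      exact Nat.pow_le_pow_right (by omega) (by simp at hj; omega)
    · exact Nat.zero_le _
  exact (card_le_natDegree p hp s heval).trans hdeg

end St10


namespace St10
variable {m : ℕ}

lemma card_KK (hm : 1 ≤ m) :
    (Finset.univ.filter (fun z : GF (2*m) => z^(2^m) = z)).card = 2^m := by
  classical
  set KK := Finset.univ.filter (fun z : GF (2*m) => z^(2^m) = z) with hKK
  set ψ : GF (2*m) → GF (2*m) := fun x => x^(2^m) + x with hψ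
  have hψadd : ∀ x y, ψ (x + y) = ψ x + ψ y := by
    intro x y; simp only [hψ, frq_add]; ring
  have hψK : ∀ x, ψ x ∈ KK := by
    intro x
    simp only [hKK, Finset.mem_filter, Finset.mem_univ, true_and, hψ]
    rw [frq_add, frq_frq hm]
    ring
  have hker : ∀ z, z ∈ KK ↔ ψ z = 0 := by
    intro z
    simp only [hKK, Finset.mem_filter, Finset.mem_univ, true_and, hψ]
    constructor
    · intro h; rw [h, CharTwo.add_self_eq_zero]
    · intro h; exact ceq h
  -- fibers of ψ over image all have card = KK.card
  have hfiber : ∀ x₀ : GF (2*m),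
      (Finset.univ.filter (fun x => ψ x = ψ x₀)).card = KK.card := by
    intro x₀
    apply Finset.card_bij' (fun x _ => x + x₀) (fun d _ => d + x₀)
    · intro x hx
      simp only [Finset.mem_filter, Finset.mem_univ, true_and] at hx
      rw [hker, hψadd, hx, CharTwo.add_self_eq_zero]
    · intro d hd
      rw [hker] at hd
      simp only [Finset.mem_filter, Finset.mem_univ, true_and]
      rw [hψadd, hd, zero_add]
    · intro x _; rw [add_assoc, CharTwo.add_self_eq_zero, add_zero]
    · intro d _; rw [add_assoc, CharTwo.add_self_eq_zero, add_zero]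
  have hpart : Fintype.card (GF (2*m)) =
      ∑ c ∈ Finset.univ.image ψ, (Finset.univ.filter (fun x => ψ x = c)).card := by
    rw [← Finset.card_univ]
    exact Finset.card_eq_sum_card_fiberwise
      (fun x _ => Finset.mem_image_of_mem ψ (Finset.mem_univ x))
  have hconst : ∀ c ∈ Finset.univ.image ψ,
      (Finset.univ.filter (fun x => ψ x = c)).card = KK.card := by
    intro c hc
    obtain ⟨x₀, _, rfl⟩ := Finset.mem_image.1 hc
    exact hfiber x₀
  rw [Finset.sum_congr rfl hconst, Finset.sum_const, smul_eq_mul] at hpart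
  have hcardE : Fintype.card (GF (2*m)) = 2^(2*m) := by
    rw [← Nat.card_eq_fintype_card]; exact GaloisField.card 2 (2*m) (by omega)
  have him : (Finset.univ.image ψ).card ≤ KK.card :=
    Finset.card_le_card (fun c hc => by
      obtain ⟨x₀, _, rfl⟩ := Finset.mem_image.1 hc
      exact hψK x₀)
  have hub := card_KK_le (m := m) hm
  rw [← hKK] at hub
  have h2m : 2^(2*m) = 2^m * 2^m := by rw [two_mul, pow_add]
  have hge : 2^m ≤ KK.card := by
    nlinarith [hpart, hcardE, him, hub]
  omega

lemma card_Z (hm : 1 ≤ m) :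
    (Finset.univ.filter (fun z : GF (2*m) => z^(2^m) = z ∧ trKm m z = 0)).card = 2^(m-1) := by
  classical
  have hsplit := Finset.card_filter_add_card_filter_not
    (s := Finset.univ.filter (fun z : GF (2*m) => z^(2^m) = z))
    (p := fun z => trKm m z = 0)
  rw [card_KK hm] at hsplit
  rw [Finset.filter_filter, Finset.filter_filter] at hsplit
  have hA : (Finset.univ.filter (fun z : GF (2*m) => z^(2^m) = z ∧ trKm m z = 0)).card
      ≤ 2^(m-1) := by
    apply card_tr_le hm 0
    intro z hz
    exact (Finset.mem_filter.1 hz).2.2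
  have hB : (Finset.univ.filter (fun z : GF (2*m) => z^(2^m) = z ∧ ¬(trKm m z = 0))).card
      ≤ 2^(m-1) := by
    apply card_tr_le hm 1
    intro z hz
    have h := (Finset.mem_filter.1 hz).2
    rcases trKm01 z h.1 with h0 | h1
    · exact absurd h0 h.2
    · exact h1
  have hpow : 2^(m-1) + 2^(m-1) = 2^m := by
    rw [← two_mul, ← pow_succ']
    congr 1; omega
  omega

end St10


namespace St10
variable {m : ℕ}

lemma coset_card (hm : 1 ≤ m) (u₁ u₂ a b t x₀ : GF (2*m))
    (h₀ : a*x₀^(2^m) + a^(2^m)*x₀ + u₁*a*atr (2*m) (u₂*x₀) + a^(2^m)*a = b)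
    (ht₀ : atr (2*m) (u₂*x₀) = t) :
    (Finset.univ.filter (fun x : GF (2*m) =>
        (a*x^(2^m) + a^(2^m)*x + u₁*a*atr (2*m) (u₂*x) + a^(2^m)*a = b)
          ∧ atr (2*m) (u₂*x) = t)).card
      = (Finset.univ.filter (fun d : GF (2*m) =>
        a*d^(2^m) + a^(2^m)*d = 0 ∧ atr (2*m) (u₂*d) = 0)).card := by
  rw [ht₀] at h₀
  apply Finset.card_bij' (fun x _ => x + x₀) (fun d _ => d + x₀)
  · intro x hx
    simp only [Finset.mem_filter, Finset.mem_univ, true_and] at hx ⊢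
    obtain ⟨hx1, hx2⟩ := hx
    rw [hx2] at hx1
    constructor
    · rw [frq_add]
      linear_combination hx1 - h₀ + (a*x₀^(2^m) + a^(2^m)*x₀)*(h2 (m := m))
    · rw [mul_add, atr_add, hx2, ht₀, CharTwo.add_self_eq_zero]
  · intro d hd
    simp only [Finset.mem_filter, Finset.mem_univ, true_and] at hd ⊢
    obtain ⟨hd1, hd2⟩ := hd
    have hτ : atr (2*m) (u₂*(d + x₀)) = t := by
      rw [mul_add, atr_add, hd2, ht₀, zero_add]
    refine ⟨?_, hτ⟩
    rw [hτ, frq_add]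
    linear_combination hd1 + h₀
  · intro x _; rw [add_assoc, CharTwo.add_self_eq_zero, add_zero]
  · intro d _; rw [add_assoc, CharTwo.add_self_eq_zero, add_zero]

lemma kerg_eq_image (hm : 1 ≤ m) (u₂ a : GF (2*m)) (ha : a ≠ 0) :
    Finset.univ.filter (fun d : GF (2*m) =>
        a*d^(2^m) + a^(2^m)*d = 0 ∧ atr (2*m) (u₂*d) = 0)
    = (Finset.univ.filter (fun y : GF (2*m) =>
        y^(2^m) = y ∧ trKm m ((u₂*a + (u₂*a)^(2^m))*y) = 0)).image (a * ·) := by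
  ext x
  simp only [Finset.mem_image, Finset.mem_filter, Finset.mem_univ, true_and]
  constructor
  · rintro ⟨hL, hT⟩
    have hL' : a * x^(2^m) = a^(2^m) * x := ceq hL
    refine ⟨a⁻¹ * x, ⟨?_, ?_⟩, mul_inv_cancel_left₀ ha x⟩
    · rw [mul_pow, inv_pow]
      have haq : a^(2^m) ≠ 0 := pow_ne_zero _ ha
      field_simp
      linear_combination -hL' + (x^(2^m)*a - x*a^(2^m))*(h2 (m := m))
    · have harg : (u₂*a + (u₂*a)^(2^m))*(a⁻¹*x) = u₂*x + (u₂*x)^(2^m) := by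
        rw [mul_pow, mul_pow]
        have haq : a^(2^m) ≠ 0 := pow_ne_zero _ ha
        field_simp
        linear_combination (u₂^(2^m))*hL' + (u₂^(2^m)*(a^(2^m)*x - a*x^(2^m)))*(h2 (m := m))
      rw [harg]
      rw [atr_eq] at hT
      exact hT
  · rintro ⟨y, ⟨hy1, hy2⟩, rfl⟩
    refine ⟨?_, ?_⟩
    · rw [mul_pow, hy1]
      linear_combination (a*a^(2^m)*y)*(h2 (m := m))
    · rw [atr_eq]
      have harg : u₂*(a*y) + (u₂*(a*y))^(2^m) = (u₂*a + (u₂*a)^(2^m))*y := by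
        rw [mul_pow, mul_pow, hy1]; ring
      rw [harg]
      exact hy2

lemma card_KT (hm : 1 ≤ m) (s : GF (2*m)) (hsK : s^(2^m) = s) (hs : s ≠ 0) :
    (Finset.univ.filter (fun y : GF (2*m) =>
      y^(2^m) = y ∧ trKm m (s*y) = 0)).card = 2^(m-1) := by
  rw [← card_Z hm]
  apply Finset.card_bij' (fun y _ => s*y) (fun z _ => s⁻¹*z)
  · intro y hy
    simp only [Finset.mem_filter, Finset.mem_univ, true_and] at hy ⊢
    exact ⟨by rw [mul_pow, hsK, hy.1], hy.2⟩
  · intro z hz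
    simp only [Finset.mem_filter, Finset.mem_univ, true_and] at hz ⊢
    constructor
    · rw [mul_pow, inv_pow, hsK, hz.1]
    · rw [mul_inv_cancel_left₀ hs]
      exact hz.2
  · intro y _; rw [inv_mul_cancel_left₀ hs]
  · intro z _; rw [mul_inv_cancel_left₀ hs]

lemma not_both (hm : 1 ≤ m)
    (u₁ u₂ : GF (2*m))
    (htr : trKm m (u₁ * u₂ ^ 2 ^ m) = 0)
    (a b : GF (2*m)) (ha : a ≠ 0)
    (hs : (u₂*a)^(2^m) = u₂*a)
    (x₀ x₁ : GF (2*m))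
    (h₀ : a*x₀^(2^m) + a^(2^m)*x₀ + u₁*a*atr (2*m) (u₂*x₀) + a^(2^m)*a = b)
    (ht₀ : atr (2*m) (u₂*x₀) = 0)
    (h₁ : a*x₁^(2^m) + a^(2^m)*x₁ + u₁*a*atr (2*m) (u₂*x₁) + a^(2^m)*a = b)
    (ht₁ : atr (2*m) (u₂*x₁) = 1) : False := by
  rw [ht₀] at h₀
  rw [ht₁] at h₁
  have hd : a*(x₀^(2^m) + x₁^(2^m)) + a^(2^m)*(x₀+x₁) = u₁*a := by
    linear_combination h₀ - h₁ + (a*x₁^(2^m) + a^(2^m)*x₁)*(h2 (m := m))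
  have hbig : (u₂*(x₀+x₁) + u₂^(2^m)*(x₀^(2^m)+x₁^(2^m))) * (a^(2^m)*a)
      = (u₁*u₂^(2^m)) * (a^(2^m)*a) := by
    linear_combination ((x₀^(2^m)+x₁^(2^m))*a - u₁*a)*hs + (u₂*a)*hd
  have hkey : u₂*(x₀+x₁) + u₂^(2^m)*(x₀^(2^m)+x₁^(2^m)) = u₁*u₂^(2^m) :=
    mul_right_cancel₀ (mul_ne_zero (pow_ne_zero _ ha) ha) hbig
  have hτ : atr (2*m) (u₂*(x₀+x₁)) = 1 := by
    rw [mul_add, atr_add, ht₀, ht₁, zero_add]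
  have hτ' : atr (2*m) (u₂*(x₀+x₁)) = 0 := by
    rw [atr_eq]
    have : u₂*(x₀+x₁) + (u₂*(x₀+x₁))^(2^m)
        = u₂*(x₀+x₁) + u₂^(2^m)*(x₀^(2^m)+x₁^(2^m)) := by
      rw [mul_pow, frq_add]
    rw [this, hkey]
    exact htr
  rw [hτ] at hτ'
  exact one_ne_zero hτ'

end St10


namespace St10
variable {m : ℕ}

lemma case_zero (hm : 1 ≤ m)
    (u₁ u₂ : GF (2*m))
    (htr : trKm m (u₁ * u₂ ^ 2 ^ m) = 0)
    (F : GF (2*m) → GF (2*m))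
    (hF : ∀ x, F x = x ^ (2 ^ m + 1) + u₁ * x * atr (2*m) (u₂ * x))
    (a b : GF (2*m)) (ha : a ≠ 0) (hε : atr (2*m) (u₂ * a) = 0) :
    (Finset.univ.filter (fun x : GF (2*m) => F (x + a) + F x = b)).card = 0 ∨
    (Finset.univ.filter (fun x : GF (2*m) => F (x + a) + F x = b)).card = 2^(m-1) ∨
    (Finset.univ.filter (fun x : GF (2*m) => F (x + a) + F x = b)).card = 2^m := by
  classical
  have hQ : ∀ x : GF (2*m), (F (x + a) + F x = b) ↔
      (a*x^(2^m) + a^(2^m)*x + u₁*a*atr (2*m) (u₂*x) + a^(2^m)*a = b) := by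
    intro x
    rw [key_eqn u₁ u₂ F hF a x, hε]
    constructor <;> intro h <;> linear_combination h
  have hSeq : Finset.univ.filter (fun x : GF (2*m) => F (x + a) + F x = b)
      = Finset.univ.filter (fun x : GF (2*m) =>
          a*x^(2^m) + a^(2^m)*x + u₁*a*atr (2*m) (u₂*x) + a^(2^m)*a = b) := by
    ext x; simp only [Finset.mem_filter, Finset.mem_univ, true_and]; exact hQ x
  rw [hSeq]
  set P : GF (2*m) → Prop := fun x =>
    a*x^(2^m) + a^(2^m)*x + u₁*a*atr (2*m) (u₂*x) + a^(2^m)*a = b with hP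
  have hsplit := Finset.card_filter_add_card_filter_not
    (s := Finset.univ.filter P) (p := fun x => atr (2*m) (u₂*x) = 0)
  rw [Finset.filter_filter, Finset.filter_filter] at hsplit
  have hBeq : Finset.univ.filter (fun x => P x ∧ ¬(atr (2*m) (u₂*x) = 0))
      = Finset.univ.filter (fun x => P x ∧ atr (2*m) (u₂*x) = 1) := by
    ext x
    simp only [Finset.mem_filter, Finset.mem_univ, true_and]
    constructor
    · rintro ⟨h1, h3⟩
      exact ⟨h1, (atr01 hm (u₂*x)).resolve_left h3⟩
    · rintro ⟨h1, h3⟩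
      exact ⟨h1, by rw [h3]; exact one_ne_zero⟩
  rw [hBeq] at hsplit
  set A := Finset.univ.filter (fun x => P x ∧ atr (2*m) (u₂*x) = 0) with hA
  set B := Finset.univ.filter (fun x => P x ∧ atr (2*m) (u₂*x) = 1) with hB
  set kerg := Finset.univ.filter (fun d : GF (2*m) =>
      a*d^(2^m) + a^(2^m)*d = 0 ∧ atr (2*m) (u₂*d) = 0) with hkerg
  have hAcard : A.card = 0 ∨ A.card = kerg.card := by
    rcases A.eq_empty_or_nonempty with h | ⟨x₀, hx₀⟩
    · left; rw [h]; rfl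
    · right
      rw [hA] at hx₀
      simp only [Finset.mem_filter, Finset.mem_univ, true_and] at hx₀
      exact coset_card hm u₁ u₂ a b 0 x₀ hx₀.1 hx₀.2
  have hBcard : B.card = 0 ∨ B.card = kerg.card := by
    rcases B.eq_empty_or_nonempty with h | ⟨x₀, hx₀⟩
    · left; rw [h]; rfl
    · right
      rw [hB] at hx₀
      simp only [Finset.mem_filter, Finset.mem_univ, true_and] at hx₀
      exact coset_card hm u₁ u₂ a b 1 x₀ hx₀.1 hx₀.2
  rw [← hsplit]
  by_cases hs0 : u₂*a + (u₂*a)^(2^m) = 0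
  · -- s = 0 : kerg has 2^m elements, and A, B cannot both be nonempty
    have hs' : (u₂*a)^(2^m) = u₂*a := (ceq hs0).symm
    have hκ : kerg.card = 2^m := by
      rw [hkerg, kerg_eq_image hm u₂ a ha,
        Finset.card_image_of_injective _ (mul_right_injective₀ ha)]
      have : Finset.univ.filter (fun y : GF (2*m) =>
          y^(2^m) = y ∧ trKm m ((u₂*a + (u₂*a)^(2^m))*y) = 0)
          = Finset.univ.filter (fun y : GF (2*m) => y^(2^m) = y) := by
        ext y
        simp only [Finset.mem_filter, Finset.mem_univ, true_and, hs0, zero_mul, trKm_zero,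
          and_true]
      rw [this, card_KK hm]
    have hnotboth : A.card = 0 ∨ B.card = 0 := by
      by_contra hcon
      push_neg at hcon
      obtain ⟨x₀, hx₀⟩ := Finset.card_ne_zero.1 hcon.1
      obtain ⟨x₁, hx₁⟩ := Finset.card_ne_zero.1 hcon.2
      rw [hA] at hx₀; rw [hB] at hx₁
      simp only [Finset.mem_filter, Finset.mem_univ, true_and] at hx₀ hx₁
      exact not_both hm u₁ u₂ htr a b ha hs' x₀ x₁ hx₀.1 hx₀.2 hx₁.1 hx₁.2
    rcases hAcard with h1 | h1 <;> rcases hBcard with h3 | h3 <;>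
      rcases hnotboth with h4 | h4 <;> omega
  · -- s ≠ 0 : kerg has 2^(m-1) elements
    have hsK : (u₂*a + (u₂*a)^(2^m))^(2^m) = u₂*a + (u₂*a)^(2^m) := by
      rw [frq_add, frq_frq hm]; ring
    have hκ : kerg.card = 2^(m-1) := by
      rw [hkerg, kerg_eq_image hm u₂ a ha,
        Finset.card_image_of_injective _ (mul_right_injective₀ ha)]
      exact card_KT hm _ hsK hs0
    have hpow : 2^(m-1) + 2^(m-1) = 2^m := by
      rw [← two_mul, ← pow_succ']
      congr 1; omega
    rcases hAcard with h1 | h1 <;> rcases hBcard with h3 | h3 <;> omega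

end St10


/-- differential spectrum of
`F(x) = x^(2^m+1) + u₁·x·Tr_{2^n/2}(u₂x)` with `u₁, u₂ ∉ K_m`,
`u₁u₂^(2^m) ∈ K_m`, `Tr_{2^m/2}(u₁u₂^(2^m)) = 0`:
`δ_F(a,b) ∈ {0,2}` if `Tr(u₂a) = 1` and `δ_F(a,b) ∈ {0, 2^(m−1), 2^m}` if `Tr(u₂a) = 0`. -/
theorem stmt10 (m : ℕ) (hm : 1 ≤ m)
    (u₁ u₂ : GF (2*m)) (hu₁ : u₁ ^ 2 ^ m ≠ u₁) (hu₂ : u₂ ^ 2 ^ m ≠ u₂)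
    (hK : (u₁ * u₂ ^ 2 ^ m) ^ 2 ^ m = u₁ * u₂ ^ 2 ^ m)
    (htr : trKm m (u₁ * u₂ ^ 2 ^ m) = 0)
    (F : GF (2*m) → GF (2*m))
    (hF : ∀ x, F x = x ^ (2 ^ m + 1) + u₁ * x * atr (2*m) (u₂ * x))
    (a b : GF (2*m)) (ha : a ≠ 0) :
    (atr (2*m) (u₂ * a) = 1 →
      ((Finset.univ.filter (fun x : GF (2*m) => F (x + a) + F x = b)).card : ℕ)
        ∈ ({0, 2} : Set ℕ)) ∧
    (atr (2*m) (u₂ * a) = 0 →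
      ((Finset.univ.filter (fun x : GF (2*m) => F (x + a) + F x = b)).card : ℕ)
        ∈ ({0, 2 ^ (m - 1), 2 ^ m} : Set ℕ)) := by
  constructor
  · intro hε
    simp only [Set.mem_insert_iff, Set.mem_singleton_iff]
    exact_mod_cast St10.case_one hm u₁ u₂ hu₁ hK htr F hF a b ha hε
  · intro hε
    simp only [Set.mem_insert_iff, Set.mem_singleton_iff]
    exact_mod_cast St10.case_zero hm u₁ u₂ htr F hF a b ha hε
end
end
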